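/- arXiv:0711.2666 — 5 statements merged into one kernel-verified Lean document; each statement's English description precedes it below -/
import Mathlib

section
/- If the set W(P,D) is nonempty, then there exists a probability measure W ∈ W(P,D) attaining the infimum: R(P,Q,D) = H(W ‖ P×Q). This holds for all D ≥ 0, including D = D_min(P,Q). -/
open MeasureTheory Filter Set Topology Classical
open scoped ENNReal NNReal

noncomputable section

/-- `-log t` as a value in `ℝ≥0∞` (equal to `∞` when `t = 0`); intended for `t ≤ 1`. -/
def negLog (t : ℝ≥0∞) : ℝ≥0∞ :=
  if t = 0 then ∞ else ENNReal.ofReal (-Real.log t.toReal)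

/-- `log t` as a value in `ℝ≥0∞` (equal to `∞` when `t = ∞`); intended for `t ≥ 1`. -/
def posLog (t : ℝ≥0∞) : ℝ≥0∞ :=
  if t = ∞ then ∞ else ENNReal.ofReal (Real.log t.toReal)

/-- The extended-real-valued logarithm of an `ℝ≥0∞` number. -/
def eLog (t : ℝ≥0∞) : EReal :=
  if t = 0 then ⊥ else if t = ∞ then ⊤ else ((Real.log t.toReal : ℝ) : EReal)

/-- Relative entropy `H(μ‖ν)` (in nats), valued in `ℝ≥0∞`: it equals
`∫ log (dμ/dν) dμ` when `μ ≪ ν` (and `+∞` when this integral is not defined,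
which for probability measures can only mean `+∞`), and `+∞` when `¬ μ ≪ ν`. -/
def relEnt {α : Type*} [MeasurableSpace α] (μ ν : Measure α) : ℝ≥0∞ :=
  if μ ≪ ν ∧ Integrable (llr μ ν) μ then ENNReal.ofReal (∫ x, llr μ ν x ∂μ) else ∞

/-- The set `W(P,D)` of couplings: probability measures on `S × T` with first
marginal `P` and expected distortion at most `D`. -/
def distSet {S T : Type*} [MeasurableSpace S] [MeasurableSpace T]
    (ρ : S × T → ℝ) (P : Measure S) (D : ℝ) : Set (Measure (S × T)) :=
  {W | IsProbabilityMeasure W ∧ W.map Prod.fst = P ∧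
    ((∫⁻ z, ENNReal.ofReal (ρ z) ∂W : ℝ≥0∞) : EReal) ≤ ((D : ℝ) : EReal)}

/-- The rate function `R(P,Q,D) = inf_{W ∈ W(P,D)} H(W‖P×Q)` (equal to `+∞`
when `W(P,D)` is empty). -/
def Rrate {S T : Type*} [MeasurableSpace S] [MeasurableSpace T]
    (ρ : S × T → ℝ) (P : Measure S) (Q : Measure T) (D : ℝ) : ℝ≥0∞ :=
  ⨅ W ∈ distSet ρ P D, relEnt W (P.prod Q)

/-- `Λ(P,Q,λ) = E_X[log E_Y e^{λρ(X,Y)}]`, valued in `EReal`.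
For `λ ≥ 0` the integrand lies in `[0,∞]`; for `λ < 0` it lies in `[-∞,0]`. -/
def Lam {S T : Type*} [MeasurableSpace S] [MeasurableSpace T]
    (ρ : S × T → ℝ) (P : Measure S) (Q : Measure T) (l : ℝ) : EReal :=
  if 0 ≤ l then
    ((∫⁻ x, posLog (∫⁻ y, ENNReal.ofReal (Real.exp (l * ρ (x, y))) ∂Q) ∂P : ℝ≥0∞) : EReal)
  else
    -(((∫⁻ x, negLog (∫⁻ y, ENNReal.ofReal (Real.exp (l * ρ (x, y))) ∂Q) ∂P : ℝ≥0∞) : EReal))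

/-- The Fenchel–Legendre transform `Λ*(P,Q,D) = sup_{λ ≤ 0} [λD - Λ(P,Q,λ)]`. -/
def LamStar {S T : Type*} [MeasurableSpace S] [MeasurableSpace T]
    (ρ : S × T → ℝ) (P : Measure S) (Q : Measure T) (D : ℝ) : EReal :=
  ⨆ l ∈ Iic (0 : ℝ), (((l * D : ℝ) : EReal) - Lam ρ P Q l)

/-- `ρ_Q(x) := essinf_{Y ∼ Q} ρ(x,Y)`. -/
def rhoQ {S T : Type*} [MeasurableSpace T]
    (ρ : S × T → ℝ) (Q : Measure T) (x : S) : ℝ :=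
  essInf (fun y => ρ (x, y)) Q

/-- `D_min(P,Q) := inf {D : Λ*(P,Q,D) < ∞}`. -/
def DminPQ {S T : Type*} [MeasurableSpace S] [MeasurableSpace T]
    (ρ : S × T → ℝ) (P : Measure S) (Q : Measure T) : ℝ :=
  sInf {D : ℝ | LamStar ρ P Q D ≠ ⊤}

/-- `D_ave(P,Q) := E ρ(X,Y)` for independent `X ∼ P`, `Y ∼ Q`, valued in `ℝ≥0∞`. -/
def DavePQ {S T : Type*} [MeasurableSpace S] [MeasurableSpace T]
    (ρ : S × T → ℝ) (P : Measure S) (Q : Measure T) : ℝ≥0∞ :=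
  ∫⁻ z, ENNReal.ofReal (ρ z) ∂(P.prod Q)

/-- The candidate derivative `Λ'(λ)` of `Λ(P,Q,·)`. -/
def LamD {S T : Type*} [MeasurableSpace S] [MeasurableSpace T]
    (ρ : S × T → ℝ) (P : Measure S) (Q : Measure T) (l : ℝ) : ℝ :=
  ∫ x, (∫ y, ρ (x, y) * Real.exp (l * ρ (x, y)) ∂Q) /
    (∫ y, Real.exp (l * ρ (x, y)) ∂Q) ∂P

/-- The left shift on sequences. -/
def shiftSeq {α : Type*} (x : ℕ → α) (n : ℕ) : α := x (n + 1)

/-- The single-letter distortion measure `ρ_n` on `n`-strings. -/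
def rhoFin {S T : Type*} (ρ : S × T → ℝ) (n : ℕ) (x : Fin n → S) (y : Fin n → T) : ℝ :=
  (n : ℝ)⁻¹ * ∑ k, ρ (x k, y k)

/-- `L_n(x_1^n, Q^n, D) = -(1/n) log Q^n(B_n(x_1^n,D))`, valued in `ℝ≥0∞`,
for a memoryless (product) codebook distribution `Q^n`. -/
def LnIID {S T : Type*} [MeasurableSpace T]
    (ρ : S × T → ℝ) (Q : Measure T) (D : ℝ) (n : ℕ) (x : ℕ → S) : ℝ≥0∞ :=
  (n : ℝ≥0∞)⁻¹ *
    negLog ((Measure.pi fun _ : Fin n => Q) {y | rhoFin ρ n (fun k => x k) y ≤ D})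

/-- The empirical distribution `P_{x_1^n} = (1/n) ∑_{k=1}^n δ_{x_k}`. -/
def empMeas {S : Type*} [MeasurableSpace S] (n : ℕ) (x : ℕ → S) : Measure S :=
  (n : ℝ≥0∞)⁻¹ • ∑ k ∈ Finset.range n, Measure.dirac (x k)

/-- The `n`-dimensional marginal of a measure on sequences. -/
def margN {α : Type*} [MeasurableSpace α] (μ : Measure (ℕ → α)) (n : ℕ) :
    Measure (Fin n → α) :=
  μ.map fun x (k : Fin n) => x (k : ℕ)

/-- The strong mixing condition `C⁻¹ 𝒬(A) 𝒬(B) ≤ 𝒬(A ∩ B) ≤ C 𝒬(A) 𝒬(B)` for all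
`A ∈ σ(Y_1^n)`, `B ∈ σ(Y_{n+1}^∞)` and all `n`. -/
def Mixing {T : Type*} [MeasurableSpace T] (𝒬 : Measure (ℕ → T)) (C : ℝ) : Prop :=
  ∀ (n : ℕ) (A B : Set (ℕ → T)),
    MeasurableSet[MeasurableSpace.comap (fun y (k : Fin n) => y (k : ℕ)) inferInstance] A →
    MeasurableSet[MeasurableSpace.comap (fun y (k : ℕ) => y (k + n)) inferInstance] B →
    (ENNReal.ofReal C)⁻¹ * (𝒬 A * 𝒬 B) ≤ 𝒬 (A ∩ B) ∧
      𝒬 (A ∩ B) ≤ ENNReal.ofReal C * (𝒬 A * 𝒬 B)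

/-- `L_n(x_1^n, Q_n, D) = -(1/n) log Q_n(B_n(x_1^n,D))` where `Q_n` is the
`n`-dimensional marginal of the codebook process law `𝒬`. -/
def LnMem {S T : Type*} [MeasurableSpace T]
    (ρ : S × T → ℝ) (𝒬 : Measure (ℕ → T)) (D : ℝ) (n : ℕ) (x : ℕ → S) : ℝ≥0∞ :=
  (n : ℝ≥0∞)⁻¹ * negLog (margN 𝒬 n {y | rhoFin ρ n (fun k => x k) y ≤ D})

/-- The set `W_n(P_n,D)` of couplings on `S^n × T^n`. -/
def distSetN {S T : Type*} [MeasurableSpace S] [MeasurableSpace T]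
    (ρ : S × T → ℝ) (n : ℕ) (Pn : Measure (Fin n → S)) (D : ℝ) :
    Set (Measure ((Fin n → S) × (Fin n → T))) :=
  {W | IsProbabilityMeasure W ∧ W.map Prod.fst = Pn ∧
    ((∫⁻ z, ENNReal.ofReal (rhoFin ρ n z.1 z.2) ∂W : ℝ≥0∞) : EReal) ≤ ((D : ℝ) : EReal)}

/-- `R_n(P_n,Q_n,D) = (1/n) inf_{W_n ∈ W_n(P_n,D)} H(W_n‖P_n×Q_n)`. -/
def RnMem {S T : Type*} [MeasurableSpace S] [MeasurableSpace T]
    (ρ : S × T → ℝ) (n : ℕ) (Pn : Measure (Fin n → S)) (Qn : Measure (Fin n → T))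
    (D : ℝ) : ℝ≥0∞ :=
  (n : ℝ≥0∞)⁻¹ * ⨅ W ∈ distSetN ρ n Pn D, relEnt W (Pn.prod Qn)

/-- `Λ_n(P_n,Q_n,λ) = E_{X_1^n}[log E_{Y_1^n} e^{λ ρ_n(X_1^n,Y_1^n)}]`. -/
def LamN {S T : Type*} [MeasurableSpace S] [MeasurableSpace T]
    (ρ : S × T → ℝ) (n : ℕ) (Pn : Measure (Fin n → S)) (Qn : Measure (Fin n → T))
    (l : ℝ) : EReal :=
  Lam (fun z => rhoFin ρ n z.1 z.2) Pn Qn l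

/-- `Λ_n*(P_n,Q_n,D) = (1/n) sup_{λ ≤ 0} [λD - Λ_n(P_n,Q_n,λ)]`. -/
def LamStarN {S T : Type*} [MeasurableSpace S] [MeasurableSpace T]
    (ρ : S × T → ℝ) (n : ℕ) (Pn : Measure (Fin n → S)) (Qn : Measure (Fin n → T))
    (D : ℝ) : EReal :=
  (((n : ℝ)⁻¹ : ℝ) : EReal) *
    ⨆ l ∈ Iic (0 : ℝ), (((l * D : ℝ) : EReal) - LamN ρ n Pn Qn l)

/-- One-sided Fenchel–Legendre transform `D ↦ sup_{λ ≤ 0} [λD - Λ(λ)]` of a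
function `Λ : ℝ → EReal`. -/
def FLT (L : ℝ → EReal) (D : ℝ) : EReal :=
  ⨆ l ∈ Iic (0 : ℝ), (((l * D : ℝ) : EReal) - L l)

/-! Relative entropy is strictly convex in a quantitative way: with `φ x = x log x + 1 - x`,
`(√a - √b)² + 4 φ ((a + b) / 2) ≤ 2 φ a + 2 φ b`. Since `W(P,D)` is convex, the midpoint of two
nearly optimal couplings is admissible, so the square roots of the densities `dWₙ / d(P×Q)` of a
minimizing sequence form a Cauchy sequence in `L²(P×Q)`. For a fast minimizing sequence they also
converge almost everywhere; the squared limit is the density of a probability measure `W`, and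
Fatou's lemma shows that `W` satisfies the marginal and distortion constraints and that
`H(W‖P×Q) ≤ R(P,Q,D)`. -/

open InformationTheory

lemma two_mul_sub_sqrt_mul_sqrt_le_mul_log_sub {a m : ℝ} (ha : 0 ≤ a) (hm : 0 < m) :
    2 * (a - √a * √m) ≤ a * Real.log a - a * Real.log m := by
  rcases ha.eq_or_lt with rfl | ha
  · simp
  have h := Real.log_le_sub_one_of_pos (div_pos (Real.sqrt_pos.2 hm) (Real.sqrt_pos.2 ha))
  rw [Real.log_div (Real.sqrt_pos.2 hm).ne' (Real.sqrt_pos.2 ha).ne', Real.log_sqrt hm.le,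
    Real.log_sqrt ha.le] at h
  have hsa : √a * √a = a := Real.mul_self_sqrt ha.le
  have hdiv : 2 * a * (√m / √a) = 2 * (√a * √m) := by
    field_simp
    nlinarith [hsa]
  nlinarith [mul_le_mul_of_nonneg_left h (by positivity : (0:ℝ) ≤ 2 * a)]

lemma sq_sqrt_sub_sqrt_add_four_mul_klFun_le {a b : ℝ} (ha : 0 ≤ a) (hb : 0 ≤ b) :
    (√a - √b) ^ 2 + 4 * klFun ((a + b) / 2) ≤ 2 * klFun a + 2 * klFun b := by
  rcases (add_nonneg ha hb).eq_or_lt with hab | hab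
  · obtain ⟨rfl, rfl⟩ : a = 0 ∧ b = 0 := ⟨by linarith, by linarith⟩
    norm_num [klFun_zero]
  set m := (a + b) / 2 with hm_def
  have hm : 0 < m := by positivity
  have h₁ := two_mul_sub_sqrt_mul_sqrt_le_mul_log_sub ha hm
  have h₂ := two_mul_sub_sqrt_mul_sqrt_le_mul_log_sub hb hm
  have hsm : √m * √m = m := Real.mul_self_sqrt hm.le
  have hsa : √a * √a = a := Real.mul_self_sqrt ha
  have hsb : √b * √b = b := Real.mul_self_sqrt hb
  have hlog : a * Real.log m + b * Real.log m = 2 * (m * Real.log m) := by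
    rw [hm_def]; ring
  simp only [klFun_apply]
  -- what is left after adding `h₁` and `h₂` is `0 ≤ (2√m - √a - √b)²`
  nlinarith [sq_nonneg (2 * √m - √a - √b)]

lemma relEnt_eq_klDiv {α : Type*} [MeasurableSpace α] {μ ν : Measure α}
    (h : μ.real univ = ν.real univ) : relEnt μ ν = klDiv μ ν := by
  by_cases hμν : μ ≪ ν ∧ Integrable (llr μ ν) μ
  · rw [relEnt, if_pos hμν, klDiv_of_ac_of_integrable hμν.1 hμν.2, h, add_sub_cancel_right]
  · rw [relEnt, if_neg hμν, eq_comm, klDiv_eq_top_iff]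
    exact fun hac hint => hμν ⟨hac, hint⟩

lemma hellinger_add_four_mul_klDiv_midpoint_le {α : Type*} [MeasurableSpace α]
    (μ₁ μ₂ ν : Measure α) [IsFiniteMeasure μ₁] [IsFiniteMeasure μ₂] [IsFiniteMeasure ν] :
    ∫⁻ x, ‖√(μ₁.rnDeriv ν x).toReal - √(μ₂.rnDeriv ν x).toReal‖ₑ ^ 2 ∂ν
        + 4 * klDiv ((2 : ℝ≥0∞)⁻¹ • μ₁ + (2 : ℝ≥0∞)⁻¹ • μ₂) ν
      ≤ 2 * klDiv μ₁ ν + 2 * klDiv μ₂ ν := by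
  by_cases h₁ : μ₁ ≪ ν
  swap; · simp [h₁, ENNReal.mul_top]
  by_cases h₂ : μ₂ ≪ ν
  swap; · simp [h₂, ENNReal.mul_top]
  have := μ₁.smul_finite (by simp : (2 : ℝ≥0∞)⁻¹ ≠ ∞)
  have := μ₂.smul_finite (by simp : (2 : ℝ≥0∞)⁻¹ ≠ ∞)
  have hM : (2 : ℝ≥0∞)⁻¹ • μ₁ + (2 : ℝ≥0∞)⁻¹ • μ₂ ≪ ν :=
    (h₁.smul_left _).add_left (h₂.smul_left _)
  have hMd : ∀ᵐ x ∂ν, (((2 : ℝ≥0∞)⁻¹ • μ₁ + (2 : ℝ≥0∞)⁻¹ • μ₂).rnDeriv ν x).toReal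
      = ((μ₁.rnDeriv ν x).toReal + (μ₂.rnDeriv ν x).toReal) / 2 := by
    filter_upwards [Measure.rnDeriv_add ((2 : ℝ≥0∞)⁻¹ • μ₁) ((2 : ℝ≥0∞)⁻¹ • μ₂) ν,
      Measure.rnDeriv_smul_left_of_ne_top μ₁ ν (by simp : (2 : ℝ≥0∞)⁻¹ ≠ ∞),
      Measure.rnDeriv_smul_left_of_ne_top μ₂ ν (by simp : (2 : ℝ≥0∞)⁻¹ ≠ ∞),
      Measure.rnDeriv_lt_top μ₁ ν, Measure.rnDeriv_lt_top μ₂ ν] with x hadd hs₁ hs₂ hlt₁ hlt₂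
    rw [hadd, Pi.add_apply, hs₁, hs₂, Pi.smul_apply, Pi.smul_apply, smul_eq_mul, smul_eq_mul,
      ENNReal.toReal_add (by finiteness) (by finiteness)]
    simp only [ENNReal.toReal_mul, ENNReal.toReal_inv, ENNReal.toReal_ofNat]
    ring
  rw [klDiv_eq_lintegral_klFun_of_ac h₁, klDiv_eq_lintegral_klFun_of_ac h₂,
    klDiv_eq_lintegral_klFun_of_ac hM, ← lintegral_const_mul, ← lintegral_const_mul,
    ← lintegral_const_mul, ← lintegral_add_left, ← lintegral_add_left]
  · refine lintegral_mono_ae ?_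
    filter_upwards [hMd] with x hx
    rw [hx]
    have ha : 0 ≤ (μ₁.rnDeriv ν x).toReal := ENNReal.toReal_nonneg
    have hb : 0 ≤ (μ₂.rnDeriv ν x).toReal := ENNReal.toReal_nonneg
    generalize (μ₁.rnDeriv ν x).toReal = a, (μ₂.rnDeriv ν x).toReal = b at ha hb ⊢
    have hm : 0 ≤ (a + b) / 2 := by positivity
    rw [Real.enorm_eq_ofReal_abs, ← ENNReal.ofReal_pow (abs_nonneg _), sq_abs]
    simp only [← ENNReal.ofReal_ofNat, ← ENNReal.ofReal_mul zero_le_four,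
      ← ENNReal.ofReal_mul zero_le_two]
    rw [← ENNReal.ofReal_add (sq_nonneg _) (mul_nonneg zero_le_four (klFun_nonneg hm)),
      ← ENNReal.ofReal_add (mul_nonneg zero_le_two (klFun_nonneg ha))
        (mul_nonneg zero_le_two (klFun_nonneg hb))]
    exact ENNReal.ofReal_le_ofReal (sq_sqrt_sub_sqrt_add_four_mul_klFun_le ha hb)
  all_goals fun_prop

section Fatou

variable {α : Type*} [MeasurableSpace α] {ν : Measure α} {μ : ℕ → Measure α} {f : α → ℝ}

lemma lintegral_withDensity_le_liminf (hf : Measurable f)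
    (hlim : ∀ᵐ x ∂ν, Tendsto (fun n => ((μ n).rnDeriv ν x).toReal) atTop (𝓝 (f x)))
    {φ : α → ℝ≥0∞} (hφ : Measurable φ) :
    ∫⁻ x, φ x ∂(ν.withDensity fun x => ENNReal.ofReal (f x))
      ≤ liminf (fun n => ∫⁻ x, φ x ∂(μ n)) atTop := by
  calc ∫⁻ x, φ x ∂(ν.withDensity fun x => ENNReal.ofReal (f x))
      = ∫⁻ x, ENNReal.ofReal (f x) * φ x ∂ν :=
        lintegral_withDensity_eq_lintegral_mul _ hf.ennreal_ofReal hφ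
    _ ≤ ∫⁻ x, liminf (fun n => ENNReal.ofReal ((μ n).rnDeriv ν x).toReal * φ x) atTop ∂ν := by
        refine lintegral_mono_ae ?_
        filter_upwards [hlim] with x hx
        by_cases h0 : ENNReal.ofReal (f x) = 0
        · simp [h0]
        exact (ENNReal.Tendsto.mul_const (ENNReal.tendsto_ofReal hx) (.inl h0)).liminf_eq.ge
    _ ≤ liminf (fun n => ∫⁻ x, ENNReal.ofReal ((μ n).rnDeriv ν x).toReal * φ x ∂ν) atTop :=
        lintegral_liminf_le fun n => by fun_prop
    _ ≤ liminf (fun n => ∫⁻ x, φ x ∂(μ n)) atTop := by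
        refine liminf_le_liminf (.of_forall fun n => ?_)
        calc ∫⁻ x, ENNReal.ofReal ((μ n).rnDeriv ν x).toReal * φ x ∂ν
            ≤ ∫⁻ x, (μ n).rnDeriv ν x * φ x ∂ν :=
              lintegral_mono fun x => mul_le_mul_left ENNReal.ofReal_toReal_le _
          _ = ∫⁻ x, φ x ∂(ν.withDensity ((μ n).rnDeriv ν)) :=
              (lintegral_withDensity_eq_lintegral_mul _ (Measure.measurable_rnDeriv _ _) hφ).symm
          _ ≤ ∫⁻ x, φ x ∂(μ n) := lintegral_mono' (Measure.withDensity_rnDeriv_le _ _) le_rfl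

lemma klDiv_withDensity_le_liminf [IsFiniteMeasure ν] [∀ n, IsFiniteMeasure (μ n)]
    [IsFiniteMeasure (ν.withDensity fun x => ENNReal.ofReal (f x))]
    (hac : ∀ n, μ n ≪ ν) (hf : Measurable f) (hf₀ : ∀ x, 0 ≤ f x)
    (hlim : ∀ᵐ x ∂ν, Tendsto (fun n => ((μ n).rnDeriv ν x).toReal) atTop (𝓝 (f x))) :
    klDiv (ν.withDensity fun x => ENNReal.ofReal (f x)) ν
      ≤ liminf (fun n => klDiv (μ n) ν) atTop := by
  simp only [klDiv_eq_lintegral_klFun_of_ac (withDensity_absolutelyContinuous _ _),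
    klDiv_eq_lintegral_klFun_of_ac (hac _)]
  calc _ = ∫⁻ x, liminf (fun n => ENNReal.ofReal (klFun ((μ n).rnDeriv ν x).toReal)) atTop ∂ν := by
        refine lintegral_congr_ae ?_
        filter_upwards [Measure.rnDeriv_withDensity ν hf.ennreal_ofReal, hlim] with x hd hx
        rw [hd, ENNReal.toReal_ofReal (hf₀ x)]
        exact (ENNReal.tendsto_ofReal ((continuous_klFun.tendsto _).comp hx)).liminf_eq.symm
    _ ≤ _ := lintegral_liminf_le fun n => by fun_prop

end Fatou

section L2

variable {α : Type*} [MeasurableSpace α] {ν : Measure α}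

lemma sq_eLpNorm_two (v : α → ℝ) : eLpNorm v 2 ν ^ 2 = ∫⁻ x, ‖v x‖ₑ ^ 2 ∂ν := by
  simpa using eLpNorm_nnreal_pow_eq_lintegral (f := v) (μ := ν) (p := 2) two_ne_zero

lemma exists_tendsto_of_lintegral_sq_sub_le {u : ℕ → α → ℝ}
    (hu : ∀ n, AEStronglyMeasurable (u n) ν)
    (h : ∀ n m, ∫⁻ x, ‖u n x - u m x‖ₑ ^ 2 ∂ν ≤ 2 * (4⁻¹ ^ n + 4⁻¹ ^ m)) :
    ∃ g : α → ℝ, StronglyMeasurable g ∧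
      (∀ᵐ x ∂ν, Tendsto (fun n => u n x) atTop (𝓝 (g x))) ∧
      Tendsto (fun n => eLpNorm (u n - g) 2 ν) atTop (𝓝 0) := by
  have hB : ∑' N, 4 * (2⁻¹ : ℝ≥0∞) ^ N ≠ ∞ := by
    rw [ENNReal.tsum_mul_left, ENNReal.tsum_geometric, ENNReal.one_sub_inv_two, inv_inv]
    finiteness
  have hcau : ∀ N n m, N ≤ n → N ≤ m → eLpNorm (u n - u m) 2 ν < 4 * 2⁻¹ ^ N := by
    intro N n m hn hm
    have h4 : ∀ k, N ≤ k → (4⁻¹ : ℝ≥0∞) ^ k ≤ 4⁻¹ ^ N := fun k hk =>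
      pow_le_pow_right_of_le_one' (by norm_num) hk
    have hle : eLpNorm (u n - u m) 2 ν ≤ 2 * 2⁻¹ ^ N := by
      rw [← ENNReal.pow_le_pow_left_iff two_ne_zero, sq_eLpNorm_two]
      calc ∫⁻ x, ‖(u n - u m) x‖ₑ ^ 2 ∂ν ≤ 2 * (4⁻¹ ^ N + 4⁻¹ ^ N) :=
            (h n m).trans (by gcongr 2 * (?_ + ?_) <;> exact h4 _ ‹_›)
        _ = (2 * 2⁻¹ ^ N) ^ 2 := by
            have h24 : (2⁻¹ : ℝ≥0∞) ^ 2 = 4⁻¹ := by rw [← ENNReal.inv_pow]; norm_num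
            rw [mul_pow, ← pow_mul, mul_comm N, pow_mul, h24]
            ring
    exact hle.trans_lt (ENNReal.mul_lt_mul_left (by simp) (by simp) (by norm_num))
  obtain ⟨g, hg, hlim⟩ := exists_stronglyMeasurable_limit_of_tendsto_ae hu
    (Lp.ae_tendsto_of_cauchy_eLpNorm hu one_le_two hB hcau)
  exact ⟨g, hg, hlim, Lp.cauchy_tendsto_of_tendsto hu g hB hcau hlim⟩

lemma eLpNorm_eq_of_tendsto_eLpNorm_sub {E : Type*} [NormedAddCommGroup E] {p : ℝ≥0∞}
    (hp : 1 ≤ p) {u : ℕ → α → E} {g : α → E} {c : ℝ≥0∞}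
    (hu : ∀ n, AEStronglyMeasurable (u n) ν) (hg : AEStronglyMeasurable g ν)
    (hc : ∀ n, eLpNorm (u n) p ν = c) (h : Tendsto (fun n => eLpNorm (u n - g) p ν) atTop (𝓝 0)) :
    eLpNorm g p ν = c := by
  refine le_antisymm (ge_of_tendsto' (by simpa using h.add_const c) fun n => ?_)
    (ge_of_tendsto' (by simpa using h.add_const (eLpNorm g p ν)) fun n => ?_)
  · calc eLpNorm g p ν = eLpNorm (u n - (u n - g)) p ν := by simp
      _ ≤ eLpNorm (u n) p ν + eLpNorm (u n - g) p ν := eLpNorm_sub_le (hu n) ((hu n).sub hg) hp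
      _ = eLpNorm (u n - g) p ν + c := by rw [hc, add_comm]
  · calc c = eLpNorm (u n - g + g) p ν := by simp [hc]
      _ ≤ eLpNorm (u n - g) p ν + eLpNorm g p ν := eLpNorm_add_le ((hu n).sub hg) hg hp

lemma enorm_sqrt_sq (t : ℝ) : ‖√t‖ₑ ^ 2 = ENNReal.ofReal t := by
  rw [Real.enorm_of_nonneg (Real.sqrt_nonneg _), ← ENNReal.ofReal_pow (Real.sqrt_nonneg _)]
  rcases le_total 0 t with ht | ht
  · rw [Real.sq_sqrt ht]
  · rw [Real.sqrt_eq_zero'.2 ht, ENNReal.ofReal_of_nonpos ht]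
    simp

lemma lintegral_ofReal_sq (g : α → ℝ) : ∫⁻ x, ENNReal.ofReal (g x ^ 2) ∂ν = eLpNorm g 2 ν ^ 2 := by
  rw [sq_eLpNorm_two]
  refine lintegral_congr fun x => ?_
  rw [Real.enorm_eq_ofReal_abs, ← ENNReal.ofReal_pow (abs_nonneg _), sq_abs]

lemma sq_eLpNorm_sqrt_rnDeriv {μ : Measure α} [IsFiniteMeasure μ] [SigmaFinite ν] (hμν : μ ≪ ν) :
    eLpNorm (fun x => √(μ.rnDeriv ν x).toReal) 2 ν ^ 2 = μ univ := by
  rw [sq_eLpNorm_two, ← Measure.lintegral_rnDeriv hμν]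
  refine lintegral_congr_ae ?_
  filter_upwards [Measure.rnDeriv_lt_top μ ν] with x hx
  rw [enorm_sqrt_sq, ENNReal.ofReal_toReal hx.ne]

end L2

section Minimizer

variable {α : Type*} [MeasurableSpace α] {ν : Measure α} [IsFiniteMeasure ν] {C : Set (Measure α)}

lemma hellinger_le_of_klDiv_le_iInf_add (hconv : Convex ℝ≥0∞ C)
    (hprob : ∀ μ ∈ C, IsProbabilityMeasure μ) (hr : ⨅ μ ∈ C, klDiv μ ν ≠ ∞)
    {μ₁ μ₂ : Measure α} (h₁ : μ₁ ∈ C) (h₂ : μ₂ ∈ C) {ε₁ ε₂ : ℝ≥0∞}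
    (hε₁ : klDiv μ₁ ν ≤ (⨅ μ ∈ C, klDiv μ ν) + ε₁) (hε₂ : klDiv μ₂ ν ≤ (⨅ μ ∈ C, klDiv μ ν) + ε₂) :
    ∫⁻ x, ‖√(μ₁.rnDeriv ν x).toReal - √(μ₂.rnDeriv ν x).toReal‖ₑ ^ 2 ∂ν ≤ 2 * (ε₁ + ε₂) := by
  have := hprob μ₁ h₁
  have := hprob μ₂ h₂
  set r := ⨅ μ ∈ C, klDiv μ ν
  have hmid : r ≤ klDiv ((2 : ℝ≥0∞)⁻¹ • μ₁ + (2 : ℝ≥0∞)⁻¹ • μ₂) ν :=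
    iInf₂_le _ (hconv h₁ h₂ zero_le zero_le ENNReal.inv_two_add_inv_two)
  refine ENNReal.le_of_add_le_add_right (a := 4 * r) (by finiteness) ?_
  calc _ ≤ ∫⁻ x, ‖√(μ₁.rnDeriv ν x).toReal - √(μ₂.rnDeriv ν x).toReal‖ₑ ^ 2 ∂ν
        + 4 * klDiv ((2 : ℝ≥0∞)⁻¹ • μ₁ + (2 : ℝ≥0∞)⁻¹ • μ₂) ν := by gcongr
    _ ≤ 2 * klDiv μ₁ ν + 2 * klDiv μ₂ ν := hellinger_add_four_mul_klDiv_midpoint_le μ₁ μ₂ ν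
    _ ≤ 2 * (r + ε₁) + 2 * (r + ε₂) := by gcongr
    _ = 2 * (ε₁ + ε₂) + 4 * r := by ring

theorem exists_klDiv_eq_iInf_of_convex (hconv : Convex ℝ≥0∞ C)
    (hprob : ∀ μ ∈ C, IsProbabilityMeasure μ)
    (hclosed : ∀ (μ : ℕ → Measure α) (f : α → ℝ), (∀ n, μ n ∈ C) → Measurable f →
      IsProbabilityMeasure (ν.withDensity fun x => ENNReal.ofReal (f x)) →
      (∀ᵐ x ∂ν, Tendsto (fun n => ((μ n).rnDeriv ν x).toReal) atTop (𝓝 (f x))) →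
      ν.withDensity (fun x => ENNReal.ofReal (f x)) ∈ C)
    (hne : C.Nonempty) :
    ∃ μ ∈ C, klDiv μ ν = ⨅ μ' ∈ C, klDiv μ' ν := by
  set r := ⨅ μ ∈ C, klDiv μ ν
  by_cases hr : r = ∞
  · obtain ⟨μ, hμ⟩ := hne
    exact ⟨μ, hμ, le_antisymm (hr.symm ▸ le_top) (iInf₂_le μ hμ)⟩
  -- a geometric rate makes the square roots of the densities converge a.e., not only in `L²`
  have hseq : ∀ n : ℕ, ∃ μ ∈ C, klDiv μ ν < r + 4⁻¹ ^ n := fun n => by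
    simpa only [r, iInf_lt_iff, exists_prop] using
      ENNReal.lt_add_right hr (by simp : (4⁻¹ : ℝ≥0∞) ^ n ≠ 0)
  choose μ hμC hμr using hseq
  have := fun n => hprob _ (hμC n)
  have hac : ∀ n, μ n ≪ ν := fun n => (klDiv_ne_top_iff.1 (hμr n).ne_top).1
  have hsqrt : ∀ n, AEStronglyMeasurable (fun x => √((μ n).rnDeriv ν x).toReal) ν := fun n =>
    (Measure.measurable_rnDeriv _ _).ennreal_toReal.sqrt.aestronglyMeasurable
  obtain ⟨g, hg, hlim, hL2⟩ := exists_tendsto_of_lintegral_sq_sub_le (ν := ν)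
    (u := fun n x => √((μ n).rnDeriv ν x).toReal) hsqrt fun n m =>
      hellinger_le_of_klDiv_le_iInf_add hconv hprob hr (hμC n) (hμC m)
        (hμr n).le (hμr m).le
  have hFg : ∀ᵐ x ∂ν, Tendsto (fun n => ((μ n).rnDeriv ν x).toReal) atTop (𝓝 (g x ^ 2)) :=
    hlim.mono fun x hx => by simpa [Real.sq_sqrt ENNReal.toReal_nonneg] using hx.pow 2
  have hg1 : eLpNorm g 2 ν = 1 := eLpNorm_eq_of_tendsto_eLpNorm_sub one_le_two hsqrt
    hg.aestronglyMeasurable (fun n => (ENNReal.pow_right_strictMono two_ne_zero).injective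
      (by rw [sq_eLpNorm_sqrt_rnDeriv (hac n), measure_univ, one_pow])) hL2
  have hW : IsProbabilityMeasure (ν.withDensity fun x => ENNReal.ofReal (g x ^ 2)) := ⟨by
    rw [withDensity_apply _ .univ, Measure.restrict_univ, lintegral_ofReal_sq, hg1, one_pow]⟩
  have hWC := hclosed μ _ hμC (hg.measurable.pow_const 2) hW hFg
  refine ⟨_, hWC, le_antisymm ?_ (iInf₂_le _ hWC)⟩
  calc _ ≤ liminf (fun n => klDiv (μ n) ν) atTop :=
        klDiv_withDensity_le_liminf hac (hg.measurable.pow_const 2) (fun x => sq_nonneg _) hFg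
    _ ≤ liminf (fun n => r + 4⁻¹ ^ n) atTop := liminf_le_liminf (.of_forall fun n => (hμr n).le)
    _ = r := by
        refine Tendsto.liminf_eq ?_
        simpa using tendsto_const_nhds.add
          (ENNReal.tendsto_pow_atTop_nhds_zero_of_lt_one (by norm_num : (4⁻¹ : ℝ≥0∞) < 1))

end Minimizer

section DistSet

variable {S T : Type*} [MeasurableSpace S] [MeasurableSpace T] {ρ : S × T → ℝ} {P : Measure S}
  {D : ℝ}

lemma mem_distSet_iff (hD : 0 ≤ D) {W : Measure (S × T)} :
    W ∈ distSet ρ P D ↔ IsProbabilityMeasure W ∧ W.map Prod.fst = P ∧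
      ∫⁻ z, ENNReal.ofReal (ρ z) ∂W ≤ ENNReal.ofReal D := by
  simp only [distSet, Set.mem_ofPred_eq, ← EReal.coe_ennreal_le_coe_ennreal_iff,
    EReal.coe_ennreal_ofReal, max_eq_left hD]

lemma convex_distSet (hD : 0 ≤ D) : Convex ℝ≥0∞ (distSet ρ P D) := by
  intro W₁ h₁ W₂ h₂ a b _ _ hab
  rw [mem_distSet_iff hD] at h₁ h₂ ⊢
  obtain ⟨hW₁, hmap₁, hρ₁⟩ := h₁
  obtain ⟨hW₂, hmap₂, hρ₂⟩ := h₂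
  refine ⟨⟨by simp [hab]⟩, ?_, ?_⟩
  · rw [Measure.map_add _ _ measurable_fst, Measure.map_smul, Measure.map_smul, hmap₁, hmap₂,
      ← add_smul, hab, one_smul]
  · rw [lintegral_add_measure, lintegral_smul_measure, lintegral_smul_measure]
    calc a * ∫⁻ z, ENNReal.ofReal (ρ z) ∂W₁ + b * ∫⁻ z, ENNReal.ofReal (ρ z) ∂W₂
        ≤ a * ENNReal.ofReal D + b * ENNReal.ofReal D := by gcongr
      _ = ENNReal.ofReal D := by rw [← add_mul, hab, one_mul]

lemma withDensity_mem_distSet (hD : 0 ≤ D) (hρ : Measurable ρ) {ν : Measure (S × T)}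
    {μ : ℕ → Measure (S × T)} {f : S × T → ℝ} (hμ : ∀ n, μ n ∈ distSet ρ P D)
    (hf : Measurable f) (hW : IsProbabilityMeasure (ν.withDensity fun z => ENNReal.ofReal (f z)))
    (hlim : ∀ᵐ z ∂ν, Tendsto (fun n => ((μ n).rnDeriv ν z).toReal) atTop (𝓝 (f z))) :
    ν.withDensity (fun z => ENNReal.ofReal (f z)) ∈ distSet ρ P D := by
  simp only [mem_distSet_iff hD] at hμ ⊢
  refine ⟨hW, ?_, ?_⟩
  · -- Fatou only bounds the marginal from above; both sides are probability measures
    refine Measure.eq_of_le_of_measure_univ_eq (Measure.le_iff.2 fun A hA => ?_) ?_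
    · have hA' : MeasurableSet (Prod.fst ⁻¹' A : Set (S × T)) := measurable_fst hA
      rw [Measure.map_apply measurable_fst hA, ← lintegral_indicator_one hA']
      refine (lintegral_withDensity_le_liminf hf hlim (measurable_one.indicator hA')).trans
        (liminf_le_of_frequently_le' (.of_forall fun n => ?_))
      rw [lintegral_indicator_one hA', ← Measure.map_apply measurable_fst hA, (hμ n).2.1]
    · have := (hμ 0).1
      rw [← (hμ 0).2.1, Measure.map_apply measurable_fst .univ,
        Measure.map_apply measurable_fst .univ, preimage_univ, measure_univ, measure_univ]
  · exact (lintegral_withDensity_le_liminf hf hlim hρ.ennreal_ofReal).trans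
      (liminf_le_of_frequently_le' (.of_forall fun n => (hμ n).2.2))

lemma rrate_eq_iInf_klDiv (Q : Measure T) [IsProbabilityMeasure P] [IsProbabilityMeasure Q] :
    Rrate ρ P Q D = ⨅ W ∈ distSet ρ P D, klDiv W (P.prod Q) :=
  iInf_congr fun W => iInf_congr fun hW => by
    have := hW.1
    exact relEnt_eq_klDiv (by simp)

end DistSet

theorem stmt1_general {S T : Type*} [MeasurableSpace S] [MeasurableSpace T]
    (ρ : S × T → ℝ) (hρm : Measurable ρ)
    (P : Measure S) (Q : Measure T) [IsProbabilityMeasure P] [IsProbabilityMeasure Q]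
    (D : ℝ) (hD : 0 ≤ D) (hne : (distSet ρ P D).Nonempty) :
    ∃ W ∈ distSet ρ P D, Rrate ρ P Q D = relEnt W (P.prod Q) := by
  obtain ⟨W, hW, hmin⟩ := exists_klDiv_eq_iInf_of_convex (ν := P.prod Q) (convex_distSet hD)
    (fun _ hW => hW.1) (fun _ _ => withDensity_mem_distSet hD hρm) hne
  have := hW.1
  exact ⟨W, hW, by rw [rrate_eq_iInf_klDiv, ← hmin, relEnt_eq_klDiv (by simp)]⟩

/-- if `W(P,D)` is nonempty (and `D ≥ 0`), a minimizer of the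
relative entropy over `W(P,D)` exists: `R(P,Q,D) = H(W‖P×Q)` for some `W ∈ W(P,D)`. -/
theorem stmt1 {S T : Type*} [MeasurableSpace S] [StandardBorelSpace S]
    [MeasurableSpace T] [StandardBorelSpace T]
    (ρ : S × T → ℝ) (hρm : Measurable ρ) (hρ0 : ∀ z, 0 ≤ ρ z)
    (P : Measure S) (Q : Measure T) [IsProbabilityMeasure P] [IsProbabilityMeasure Q]
    (D : ℝ) (hD : 0 ≤ D) (hne : (distSet ρ P D).Nonempty) :
    ∃ W ∈ distSet ρ P D, Rrate ρ P Q D = relEnt W (P.prod Q) :=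
  stmt1_general ρ hρm P Q D hD hne

end
end

section
/- For every probability measure W ∈ W(P,D), one has H(W ‖ P×Q) ≥ Λ*(P,Q,D). -/
open MeasureTheory Filter Set Topology Classical
open scoped ENNReal NNReal

noncomputable section

/-! For `λ ≤ 0`, the function `f(x,y) = λ ρ(x,y) - log E_Q e^{λ ρ(x,Y)}` satisfies
`E_{P×Q} e^f = 1`, so the Donsker–Varadhan inequality gives `H(W‖P×Q) ≥ E_W f`. Since the first
marginal of `W` is `P`, `E_W f = λ E_W ρ - Λ(P,Q,λ) ≥ λ D - Λ(P,Q,λ)`. The term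
`-log E_Q e^{λ ρ(x,Y)} ≥ 0` need not be `P`-integrable, so it is first truncated at level `n`
and the bound passes to the limit by monotone convergence. -/

section DonskerVaradhan

variable {α : Type*} [MeasurableSpace α] {μ ν : Measure α}
  [IsProbabilityMeasure μ] [IsProbabilityMeasure ν]

/-- Donsker–Varadhan: Gibbs' inequality for `μ` against the tilted measure `ν.tilted f`. -/
theorem integral_le_integral_llr_of_lintegral_exp_le_one (hμν : μ ≪ ν)
    (h_int : Integrable (llr μ ν) μ) {f : α → ℝ} (hfm : Measurable f) (hfμ : Integrable f μ)
    (hfν : ∫⁻ x, ENNReal.ofReal (Real.exp (f x)) ∂ν ≤ 1) :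
    ∫ x, f x ∂μ ≤ ∫ x, llr μ ν x ∂μ := by
  have hexp_nonneg : 0 ≤ᵐ[ν] fun x => Real.exp (f x) := ae_of_all _ fun x => (Real.exp_pos _).le
  have hexp : Integrable (fun x => Real.exp (f x)) ν :=
    ⟨hfm.exp.aestronglyMeasurable, by
      rw [hasFiniteIntegral_iff_ofReal hexp_nonneg]; exact hfν.trans_lt ENNReal.one_lt_top⟩
  have := isProbabilityMeasure_tilted hexp
  have gibbs := InformationTheory.integral_llr_add_sub_measure_univ_nonneg
    (hμν.trans (absolutelyContinuous_tilted hexp)) (integrable_llr_tilted_right hμν hfμ h_int hexp)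
  rw [integral_llr_tilted_right hμν hfμ hexp h_int] at gibbs
  have hlog : Real.log (∫ x, Real.exp (f x) ∂ν) ≤ 0 := by
    refine Real.log_nonpos (integral_nonneg fun x => (Real.exp_pos _).le) ?_
    rw [integral_eq_lintegral_of_nonneg_ae hexp_nonneg hfm.exp.aestronglyMeasurable]
    exact ENNReal.toReal_le_of_le_ofReal zero_le_one (by simpa using hfν)
  simp only [probReal_univ] at gibbs
  linarith

theorem ofReal_eq_iSup_ofReal_min_natCast (r : ℝ) :
    ENNReal.ofReal r = ⨆ n : ℕ, ENNReal.ofReal (min (n : ℝ) r) :=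
  le_antisymm
    (le_iSup_of_le ⌈r⌉₊ (by rw [min_eq_right (Nat.le_ceil r)]))
    (iSup_le fun _ => ENNReal.ofReal_le_ofReal (min_le_right _ _))

theorem lintegral_ofReal_le_integral_llr_sub (hμν : μ ≪ ν) (h_int : Integrable (llr μ ν) μ)
    {ψ F : α → ℝ} (hψm : Measurable ψ) (hψ : Integrable ψ μ) (hFm : Measurable F)
    (hF0 : 0 ≤ F) (hexp : ∫⁻ x, ENNReal.ofReal (Real.exp (ψ x + F x)) ∂ν ≤ 1) :
    ∫⁻ x, ENNReal.ofReal (F x) ∂μ ≤ ENNReal.ofReal (∫ x, llr μ ν x ∂μ - ∫ x, ψ x ∂μ) := by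
  have htrunc (n : ℕ) :
      ∫⁻ x, ENNReal.ofReal (min (n : ℝ) (F x)) ∂μ ≤
        ENNReal.ofReal (∫ x, llr μ ν x ∂μ - ∫ x, ψ x ∂μ) := by
    have hmin0 : 0 ≤ᵐ[μ] fun x => min (n : ℝ) (F x) :=
      ae_of_all _ fun x => le_min n.cast_nonneg (hF0 x)
    have hmin : Integrable (fun x => min (n : ℝ) (F x)) μ :=
      (integrable_const (n : ℝ)).mono' (measurable_const.min hFm).aestronglyMeasurable
        (hmin0.mono fun x hx => by rw [Real.norm_eq_abs, abs_of_nonneg hx]; exact min_le_left _ _)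
    have hDV := integral_le_integral_llr_of_lintegral_exp_le_one hμν h_int
      (f := fun x => ψ x + min (n : ℝ) (F x)) (hψm.add (measurable_const.min hFm)) (hψ.add hmin)
      ((lintegral_mono fun x => ENNReal.ofReal_le_ofReal <| Real.exp_le_exp.mpr <| by
        gcongr; exact min_le_right _ _).trans hexp)
    rw [integral_add hψ hmin] at hDV
    rw [← ofReal_integral_eq_lintegral_ofReal hmin hmin0]
    exact ENNReal.ofReal_le_ofReal (by linarith)
  calc ∫⁻ x, ENNReal.ofReal (F x) ∂μ
      = ∫⁻ x, ⨆ n : ℕ, ENNReal.ofReal (min (n : ℝ) (F x)) ∂μ := by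
        simp_rw [← ofReal_eq_iSup_ofReal_min_natCast]
    _ = ⨆ n : ℕ, ∫⁻ x, ENNReal.ofReal (min (n : ℝ) (F x)) ∂μ :=
        lintegral_iSup (fun n => (measurable_const.min hFm).ennreal_ofReal)
          fun m n hmn x => ENNReal.ofReal_le_ofReal (min_le_min_right _ (Nat.cast_le.mpr hmn))
    _ ≤ _ := iSup_le htrunc

end DonskerVaradhan

section ExpMoment

variable {S T : Type*} [MeasurableSpace T]

def expMoment (φ : S × T → ℝ) (Q : Measure T) (x : S) : ℝ≥0∞ :=
  ∫⁻ y, ENNReal.ofReal (Real.exp (φ (x, y))) ∂Q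

variable {φ : S × T → ℝ} {Q : Measure T}

theorem measurable_expMoment [MeasurableSpace S] [SFinite Q] (hφ : Measurable φ) :
    Measurable (expMoment φ Q) :=
  hφ.exp.ennreal_ofReal.lintegral_prod_right'

theorem expMoment_ne_zero [MeasurableSpace S] [NeZero Q] (hφ : Measurable φ) (x : S) :
    expMoment φ Q x ≠ 0 := by
  rw [expMoment, Ne, lintegral_eq_zero_iff (by fun_prop)]
  intro h
  exact NeZero.ne Q (ae_eq_bot.mp (eventually_false_iff_eq_bot.mp (h.mono fun y hy =>
    (ENNReal.ofReal_pos.mpr (Real.exp_pos _)).ne' hy)))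

theorem expMoment_le_one [IsProbabilityMeasure Q] (hφ0 : ∀ z, φ z ≤ 0) (x : S) :
    expMoment φ Q x ≤ 1 :=
  (lintegral_mono fun y => ENNReal.ofReal_le_one.mpr (Real.exp_le_one_iff.mpr (hφ0 _))).trans
    (by simp)

theorem lintegral_exp_add_neg_log_expMoment [MeasurableSpace S] {P : Measure S}
    [IsProbabilityMeasure P] [SFinite Q]
    (hφ : Measurable φ) (h0 : ∀ x, expMoment φ Q x ≠ 0) (htop : ∀ x, expMoment φ Q x ≠ ∞) :
    ∫⁻ z, ENNReal.ofReal (Real.exp (φ z + -Real.log (expMoment φ Q z.1).toReal)) ∂(P.prod Q)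
      = 1 := by
  have hm : Measurable fun x => -Real.log (expMoment φ Q x).toReal :=
    (measurable_expMoment hφ).ennreal_toReal.log.neg
  have hmeas : Measurable fun z : S × T =>
      ENNReal.ofReal (Real.exp (φ z + -Real.log (expMoment φ Q z.1).toReal)) :=
    (hφ.add (hm.comp measurable_fst)).exp.ennreal_ofReal
  have hinner (x : S) :
      ∫⁻ y, ENNReal.ofReal (Real.exp (φ (x, y) + -Real.log (expMoment φ Q x).toReal)) ∂Q = 1 := by
    have hpos : 0 < (expMoment φ Q x).toReal := ENNReal.toReal_pos (h0 x) (htop x)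
    simp_rw [Real.exp_add, ENNReal.ofReal_mul (Real.exp_nonneg _)]
    rw [lintegral_mul_const _ (by fun_prop), ← expMoment, Real.exp_neg, Real.exp_log hpos,
      ENNReal.ofReal_inv_of_pos hpos, ENNReal.ofReal_toReal (htop x),
      ENNReal.mul_inv_cancel (h0 x) (htop x)]
  rw [lintegral_prod _ hmeas.aemeasurable]
  simp only [hinner, lintegral_const, measure_univ, one_mul]

end ExpMoment

theorem Lam_of_nonpos {S T : Type*} [MeasurableSpace S] [MeasurableSpace T] (ρ : S × T → ℝ)
    (P : Measure S) (Q : Measure T) [IsProbabilityMeasure Q] {l : ℝ} (hl : l ≤ 0) :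
    Lam ρ P Q l = -((∫⁻ x, negLog (expMoment (fun z => l * ρ z) Q x) ∂P : ℝ≥0∞) : EReal) := by
  rcases hl.lt_or_eq with hl | rfl
  · rw [Lam, if_neg hl.not_ge]; rfl
  · simp [Lam, expMoment, posLog, negLog]

theorem integrable_and_integral_le_of_mem_distSet {S T : Type*} [MeasurableSpace S]
    [MeasurableSpace T] {ρ : S × T → ℝ} (hρm : Measurable ρ) (hρ0 : ∀ z, 0 ≤ ρ z)
    {P : Measure S} {D : ℝ} {W : Measure (S × T)} (hW : W ∈ distSet ρ P D) :
    Integrable ρ W ∧ ∫ z, ρ z ∂W ≤ D := by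
  have hI : ∫⁻ z, ENNReal.ofReal (ρ z) ∂W ≠ ∞ := by
    intro h
    simpa [h] using hW.2.2
  refine ⟨⟨hρm.aestronglyMeasurable,
    (hasFiniteIntegral_iff_ofReal (ae_of_all _ hρ0)).mpr hI.lt_top⟩, ?_⟩
  have hD := hW.2.2
  rw [← ENNReal.ofReal_toReal hI, EReal.coe_ennreal_ofReal, EReal.coe_le_coe_iff] at hD
  rw [integral_eq_lintegral_of_nonneg_ae (ae_of_all _ hρ0) hρm.aestronglyMeasurable]
  exact (le_max_left _ _).trans hD

theorem lintegral_negLog_expMoment_le_relEnt_add {S T : Type*} [MeasurableSpace S]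
    [MeasurableSpace T] {ρ : S × T → ℝ} (hρm : Measurable ρ) (hρ0 : ∀ z, 0 ≤ ρ z)
    {P : Measure S} {Q : Measure T} [IsProbabilityMeasure P] [IsProbabilityMeasure Q]
    {D l : ℝ} (hl : l ≤ 0) {W : Measure (S × T)} (hW : W ∈ distSet ρ P D) :
    ∫⁻ x, negLog (expMoment (fun z => l * ρ z) Q x) ∂P ≤
      relEnt W (P.prod Q) + ENNReal.ofReal (-(l * D)) := by
  obtain ⟨hρint, hρD⟩ := integrable_and_integral_le_of_mem_distSet hρm hρ0 hW
  obtain ⟨hWprob, hWfst, -⟩ := hW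
  rw [relEnt]
  split_ifs with hreg
  swap
  · simp
  obtain ⟨hac, hint⟩ := hreg
  have hφ : Measurable fun z => l * ρ z := hρm.const_mul l
  set g := expMoment (fun z => l * ρ z) Q
  have hg0 : ∀ x, g x ≠ 0 := expMoment_ne_zero hφ
  have hg1 : ∀ x, g x ≤ 1 := expMoment_le_one fun z => mul_nonpos_of_nonpos_of_nonneg hl (hρ0 z)
  set G : S → ℝ := fun x => -Real.log (g x).toReal
  have hG0 : ∀ x, 0 ≤ G x := fun x =>
    neg_nonneg.mpr (Real.log_nonpos ENNReal.toReal_nonneg (ENNReal.toReal_le_of_le_ofReal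
      zero_le_one (by simpa using hg1 x)))
  have hGm : Measurable G := (measurable_expMoment hφ).ennreal_toReal.log.neg
  calc ∫⁻ x, negLog (g x) ∂P
      = ∫⁻ x, ENNReal.ofReal (G x) ∂P := lintegral_congr fun x => if_neg (hg0 x)
    _ = ∫⁻ z, ENNReal.ofReal (G z.1) ∂W := by
        rw [← hWfst, lintegral_map hGm.ennreal_ofReal measurable_fst]
    _ ≤ ENNReal.ofReal (∫ z, llr W (P.prod Q) z ∂W - ∫ z, l * ρ z ∂W) :=
        lintegral_ofReal_le_integral_llr_sub hac hint hφ (hρint.const_mul l)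
          (hGm.comp measurable_fst) (fun z => hG0 z.1)
          (lintegral_exp_add_neg_log_expMoment hφ hg0
            fun x => ((hg1 x).trans_lt ENNReal.one_lt_top).ne).le
    _ ≤ ENNReal.ofReal (∫ z, llr W (P.prod Q) z ∂W) + ENNReal.ofReal (-(l * D)) := by
        refine (ENNReal.ofReal_le_ofReal ?_).trans ENNReal.ofReal_add_le
        rw [integral_const_mul]
        linarith [mul_le_mul_of_nonpos_left hρD hl]

theorem EReal.coe_sub_neg_coe_ennreal_le {r : ℝ} (hr : r ≤ 0) {a b : ℝ≥0∞}
    (h : a ≤ b + ENNReal.ofReal (-r)) : (r : EReal) - -(a : EReal) ≤ b := by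
  rcases eq_or_ne b ∞ with rfl | hb
  · simp
  have ha : a ≠ ∞ := ne_top_of_le_ne_top (ENNReal.add_ne_top.mpr ⟨hb, ENNReal.ofReal_ne_top⟩) h
  have h' := ENNReal.toReal_mono (ENNReal.add_ne_top.mpr ⟨hb, ENNReal.ofReal_ne_top⟩) h
  rw [ENNReal.toReal_add hb ENNReal.ofReal_ne_top, ENNReal.toReal_ofReal (neg_nonneg.mpr hr)] at h'
  rw [← ENNReal.ofReal_toReal ha, ← ENNReal.ofReal_toReal hb, EReal.coe_ennreal_ofReal,
    EReal.coe_ennreal_ofReal, max_eq_left ENNReal.toReal_nonneg, max_eq_left ENNReal.toReal_nonneg,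
    ← EReal.coe_neg, ← EReal.coe_sub, EReal.coe_le_coe_iff]
  linarith

theorem stmt2_general {S T : Type*} [MeasurableSpace S]
    [MeasurableSpace T]
    (ρ : S × T → ℝ) (hρm : Measurable ρ) (hρ0 : ∀ z, 0 ≤ ρ z)
    (P : Measure S) (Q : Measure T) [IsProbabilityMeasure P] [IsProbabilityMeasure Q]
    (D : ℝ) (W : Measure (S × T)) (hW : W ∈ distSet ρ P D) :
    LamStar ρ P Q D ≤ ((relEnt W (P.prod Q) : ℝ≥0∞) : EReal) :=
  iSup₂_le fun l hl => by
    have hD : 0 ≤ D :=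
      (integral_nonneg hρ0).trans (integrable_and_integral_le_of_mem_distSet hρm hρ0 hW).2
    rw [Lam_of_nonpos ρ P Q hl]
    exact EReal.coe_sub_neg_coe_ennreal_le (mul_nonpos_of_nonpos_of_nonneg hl hD)
      (lintegral_negLog_expMoment_le_relEnt_add hρm hρ0 hl hW)

/-- for every `W ∈ W(P,D)`, `H(W‖P×Q) ≥ Λ*(P,Q,D)`. -/
theorem stmt2 {S T : Type*} [MeasurableSpace S] [StandardBorelSpace S]
    [MeasurableSpace T] [StandardBorelSpace T]
    (ρ : S × T → ℝ) (hρm : Measurable ρ) (hρ0 : ∀ z, 0 ≤ ρ z)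
    (P : Measure S) (Q : Measure T) [IsProbabilityMeasure P] [IsProbabilityMeasure Q]
    (D : ℝ) (W : Measure (S × T)) (hW : W ∈ distSet ρ P D) :
    LamStar ρ P Q D ≤ ((relEnt W (P.prod Q) : ℝ≥0∞) : EReal) :=
  stmt2_general ρ hρm hρ0 P Q D W hW

end
end

section
/- If D_min := inf{D : Λ*(P,Q,D) < ∞} is finite, then Λ*(P,Q,D_min) = E_X[ −log Q{y : ρ(X,y) = ρ_Q(X)} ]. -/
open MeasureTheory Filter Set Topology Classical
open scoped ENNReal NNReal

noncomputable section

/-!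
Writing `λ = -c` with `c ≥ 0` and factoring `e^{-c ρ_Q(x)}` out of `E_Y e^{-c ρ(x,Y)}` gives
`λ D - Λ(λ) = c (m - D) + G(c)`, where `m = E ρ_Q(X)` (`meanRhoQ`) and
`G(c) = E_X[-log E_Y e^{-c (ρ(X,Y) - ρ_Q(X))}]` (`meanNegLogExcessMGF`); finiteness of `Λ*` anywhere forces `m < ∞` and
`G(1) < ∞`. `G` is nondecreasing and, by monotone convergence, increases to
`E_X[-log Q{y : ρ(X,y) = ρ_Q(X)}]`; by Jensen `G(c)/c` is nonincreasing, and dominated convergence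
gives `G(c)/c → 0`. Hence `Λ*(D) = ∞` for `D < m` and `Λ*(D) < ∞` for `D > m`, so `D_min = m`,
and `Λ*(m) = sup_c G(c)` is the claimed expectation.
-/

lemma negLog_eq_toENNReal_neg_log (t : ℝ≥0∞) : negLog t = (-ENNReal.log t).toENNReal := by
  unfold negLog
  rcases eq_or_ne t 0 with rfl | h0
  · simp
  rcases eq_or_ne t ⊤ with rfl | htop
  · simp
  rw [if_neg h0, ENNReal.log_pos_real h0 htop, ← EReal.coe_neg, EReal.toENNReal_of_ne_top
    (EReal.coe_ne_top _), EReal.toReal_coe]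

lemma continuous_negLog : Continuous negLog := by
  simp_rw [funext negLog_eq_toENNReal_neg_log]
  exact EReal.continuous_toENNReal.comp (continuous_neg.comp ENNReal.continuous_log)

lemma measurable_negLog : Measurable negLog := continuous_negLog.measurable

lemma negLog_antitone : Antitone negLog := fun a b hab => by
  simp_rw [negLog_eq_toENNReal_neg_log]
  exact EReal.toENNReal_le_toENNReal (EReal.neg_le_neg_iff.2 (ENNReal.log_monotone hab))

lemma negLog_one : negLog 1 = 0 := by simp [negLog]

lemma negLog_ne_top {t : ℝ≥0∞} (ht : t ≠ 0) : negLog t ≠ ⊤ := by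
  rw [negLog, if_neg ht]
  exact ENNReal.ofReal_ne_top

lemma negLog_ofReal_exp (t : ℝ) : negLog (ENNReal.ofReal (Real.exp t)) = ENNReal.ofReal (-t) := by
  rw [negLog, if_neg (by simp [Real.exp_pos]), ENNReal.toReal_ofReal (Real.exp_pos t).le,
    Real.log_exp]

lemma negLog_mul {a b : ℝ≥0∞} (ha : a ≤ 1) (hb : b ≤ 1) :
    negLog (a * b) = negLog a + negLog b := by
  have ha' : ENNReal.log a ≤ 0 := ENNReal.log_le_zero_iff.2 ha
  have hb' : ENNReal.log b ≤ 0 := ENNReal.log_le_zero_iff.2 hb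
  simp only [negLog_eq_toENNReal_neg_log, ENNReal.log_mul_add]
  rw [EReal.neg_add (Or.inr (ne_top_of_le_ne_top EReal.zero_ne_top hb'))
    (Or.inl (ne_top_of_le_ne_top EReal.zero_ne_top ha')), sub_eq_add_neg,
    EReal.toENNReal_add (EReal.neg_nonneg.2 ha') (EReal.neg_nonneg.2 hb')]

lemma negLog_rpow {p : ℝ} (hp : 0 ≤ p) (a : ℝ≥0∞) :
    negLog (a ^ p) = ENNReal.ofReal p * negLog a := by
  simp_rw [negLog_eq_toENNReal_neg_log, ENNReal.log_rpow, ← mul_neg,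
    EReal.toENNReal_mul (EReal.coe_nonneg.2 hp), EReal.toENNReal_of_ne_top (EReal.coe_ne_top p),
    EReal.toReal_coe]

section EssInf

variable {α : Type*} [MeasurableSpace α] {μ : Measure α} [NeZero μ] {f : α → ℝ}

lemma isCoboundedUnder_ge_ae : IsCoboundedUnder (· ≥ ·) (ae μ) f := by
  obtain ⟨n, hn⟩ : ∃ n : ℕ, μ {y | f y < n} ≠ 0 := by
    by_contra! h
    have hunion : (⋃ n : ℕ, {y | f y < n}) = univ :=
      iUnion_eq_univ_iff.2 fun y => exists_nat_gt (f y)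
    exact NeZero.ne μ (Measure.measure_univ_eq_zero.1 (hunion ▸ measure_iUnion_null h))
  refine ⟨n, fun a ha => not_lt.1 fun hna => ?_⟩
  exact hn (measure_mono_null (fun y hy => not_le.2 (lt_trans hy hna)) (ae_iff.1 ha))

lemma le_essInf_iff_ae_le (hf : IsBoundedUnder (· ≥ ·) (ae μ) f) {c : ℝ} :
    c ≤ essInf f μ ↔ ∀ᵐ y ∂μ, c ≤ f y :=
  ⟨fun h => (ae_essInf_le hf).mono fun _ hy => h.trans hy,
    fun h => le_essInf_of_ae_le c h isCoboundedUnder_ge_ae⟩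

lemma measure_lt_essInf_add_ne_zero {ε : ℝ} (hε : 0 < ε) :
    μ {y | f y < essInf f μ + ε} ≠ 0 := fun h => by
  have := le_essInf_of_ae_le (essInf f μ + ε) (ae_iff.2 (by simpa only [not_le] using h))
    isCoboundedUnder_ge_ae
  linarith

end EssInf

lemma measurable_of_measurableSet_rat_le {α : Type*} [MeasurableSpace α] {f : α → ℝ}
    (hf : ∀ q : ℚ, MeasurableSet {x | (q : ℝ) ≤ f x}) : Measurable f := by
  refine measurable_of_Ici fun c => ?_
  have : f ⁻¹' Ici c = ⋂ (q : ℚ) (_ : (q : ℝ) < c), {x | (q : ℝ) ≤ f x} := by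
    ext x
    simp only [mem_preimage, mem_Ici, mem_iInter, mem_ofPred_eq]
    exact ⟨fun h q hq => hq.le.trans h, le_of_forall_rat_lt_imp_le⟩
  rw [this]
  exact .iInter fun q => .iInter fun _ => hf q

lemma rpow_lintegral_le_lintegral_rpow {α : Type*} [MeasurableSpace α] {μ : Measure α}
    [IsProbabilityMeasure μ] {u : α → ℝ≥0∞} (hu : AEMeasurable u μ) {p : ℝ}
    (hp : 1 ≤ p) :
    (∫⁻ a, u a ∂μ) ^ p ≤ ∫⁻ a, u a ^ p ∂μ := by
  rcases hp.eq_or_lt with rfl | hp1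
  · simp
  have hp0 : 0 < p := zero_lt_one.trans hp1
  have holder : ∫⁻ a, u a ∂μ ≤ (∫⁻ a, u a ^ p ∂μ) ^ (1 / p) := by
    simpa using ENNReal.lintegral_mul_le_Lp_mul_Lq μ (Real.HolderConjugate.conjExponent hp1) hu
      (aemeasurable_const (b := (1 : ℝ≥0∞)))
  calc (∫⁻ a, u a ∂μ) ^ p ≤ ((∫⁻ a, u a ^ p ∂μ) ^ (1 / p)) ^ p := by gcongr
    _ = ∫⁻ a, u a ^ p ∂μ := by
      rw [← ENNReal.rpow_mul, one_div, inv_mul_cancel₀ hp0.ne', ENNReal.rpow_one]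

section ExcessMGF

variable {S T : Type*} [MeasurableSpace T] {ρ : S × T → ℝ} {Q : Measure T}

lemma rhoQ_nonneg [NeZero Q] (hρ0 : ∀ z, 0 ≤ ρ z) (x : S) : 0 ≤ rhoQ ρ Q x :=
  le_essInf_of_ae_le 0 (ae_of_all _ fun y => hρ0 (x, y)) isCoboundedUnder_ge_ae

lemma ae_rhoQ_le (hρ0 : ∀ z, 0 ≤ ρ z) (x : S) : ∀ᵐ y ∂Q, rhoQ ρ Q x ≤ ρ (x, y) :=
  ae_essInf_le (isBoundedUnder_of_eventually_ge (ae_of_all _ fun y => hρ0 (x, y)))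

variable (ρ Q) in
def excessMGF (c : ℝ) (x : S) : ℝ≥0∞ :=
  ∫⁻ y, ENNReal.ofReal (Real.exp (-(c * (ρ (x, y) - rhoQ ρ Q x)))) ∂Q

lemma excessMGF_antitone (hρ0 : ∀ z, 0 ≤ ρ z) {c c' : ℝ} (hcc' : c ≤ c') (x : S) :
    excessMGF ρ Q c' x ≤ excessMGF ρ Q c x :=
  lintegral_mono_ae ((ae_rhoQ_le hρ0 x).mono fun y hy => by gcongr)

lemma excessMGF_zero [IsProbabilityMeasure Q] (x : S) : excessMGF ρ Q 0 x = 1 := by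
  simp [excessMGF]

lemma excessMGF_le_one [IsProbabilityMeasure Q] (hρ0 : ∀ z, 0 ≤ ρ z) {c : ℝ} (hc : 0 ≤ c)
    (x : S) : excessMGF ρ Q c x ≤ 1 :=
  (excessMGF_antitone hρ0 hc x).trans_eq (excessMGF_zero x)

variable [MeasurableSpace S]

lemma measurable_excessMGF_integrand (hρm : Measurable ρ) (c : ℝ) (x : S) :
    Measurable fun y => ENNReal.ofReal (Real.exp (-(c * (ρ (x, y) - rhoQ ρ Q x)))) :=
  ((((hρm.comp measurable_prodMk_left).sub_const _).const_mul c).neg.exp).ennreal_ofReal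

lemma measure_eq_rhoQ_le_excessMGF (hρm : Measurable ρ) (c : ℝ) (x : S) :
    Q {y | ρ (x, y) = rhoQ ρ Q x} ≤ excessMGF ρ Q c x := by
  calc Q {y | ρ (x, y) = rhoQ ρ Q x}
      = ∫⁻ y in {y | ρ (x, y) = rhoQ ρ Q x}, 1 ∂Q := (setLIntegral_one _).symm
    _ ≤ ∫⁻ y in {y | ρ (x, y) = rhoQ ρ Q x},
          ENNReal.ofReal (Real.exp (-(c * (ρ (x, y) - rhoQ ρ Q x)))) ∂Q :=
        setLIntegral_mono (measurable_excessMGF_integrand hρm c x) fun y (hy : _ = _) => by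
          simp [hy]
    _ ≤ excessMGF ρ Q c x := setLIntegral_le_lintegral _ _

lemma ofReal_exp_mul_measure_le_excessMGF (hρm : Measurable ρ) {c ε : ℝ} (hc : 0 ≤ c)
    (x : S) : ENNReal.ofReal (Real.exp (-(c * ε))) * Q {y | ρ (x, y) < rhoQ ρ Q x + ε}
      ≤ excessMGF ρ Q c x := by
  rw [← setLIntegral_const]
  refine (setLIntegral_mono (measurable_excessMGF_integrand hρm c x) fun y hy => ?_).trans
    (setLIntegral_le_lintegral _ _)
  have hy : ρ (x, y) < rhoQ ρ Q x + ε := hy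
  gcongr
  linarith

variable [IsProbabilityMeasure Q]

lemma measurable_rhoQ (hρm : Measurable ρ) (hρ0 : ∀ z, 0 ≤ ρ z) :
    Measurable (rhoQ ρ Q) := by
  refine measurable_of_measurableSet_rat_le fun q => ?_
  have hset : {x | (q : ℝ) ≤ rhoQ ρ Q x} =
      (fun x => Q (Prod.mk x ⁻¹' {z | ρ z < q})) ⁻¹' {0} := by
    ext x
    simp only [rhoQ, mem_ofPred_eq, mem_preimage, mem_singleton_iff,
      le_essInf_iff_ae_le (isBoundedUnder_of_eventually_ge (ae_of_all _ fun y => hρ0 (x, y))),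
      ae_iff, not_le]
    rfl
  rw [hset]
  exact measurable_measure_prodMk_left (measurableSet_lt hρm measurable_const)
    (measurableSet_singleton 0)

lemma measurable_excessMGF (hρm : Measurable ρ) (hρ0 : ∀ z, 0 ≤ ρ z) (c : ℝ) :
    Measurable (excessMGF ρ Q c) :=
  Measurable.lintegral_prod_right' ((((hρm.sub ((measurable_rhoQ hρm hρ0).comp
    measurable_fst)).const_mul c).neg.exp).ennreal_ofReal)

lemma tendsto_excessMGF (hρm : Measurable ρ) (hρ0 : ∀ z, 0 ≤ ρ z) (x : S) :
    Tendsto (fun n : ℕ => excessMGF ρ Q n x) atTop (𝓝 (Q {y | ρ (x, y) = rhoQ ρ Q x})) := by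
  have hmeas : MeasurableSet {y | ρ (x, y) = rhoQ ρ Q x} :=
    measurableSet_eq_fun (hρm.comp measurable_prodMk_left) measurable_const
  rw [← lintegral_indicator_one hmeas]
  refine tendsto_lintegral_of_dominated_convergence (fun _ => 1)
    (fun n => measurable_excessMGF_integrand hρm n x) (fun n => ?_) (by simp) ?_
  · filter_upwards [ae_rhoQ_le hρ0 x] with y hy
    rw [ENNReal.ofReal_le_one, Real.exp_le_one_iff, neg_nonpos]
    exact mul_nonneg n.cast_nonneg (sub_nonneg.2 hy)
  filter_upwards [ae_rhoQ_le hρ0 x] with y hy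
  rcases hy.eq_or_lt with heq | hlt
  · simp [← heq]
  · rw [indicator_of_notMem (show y ∉ {y | ρ (x, y) = rhoQ ρ Q x} from hlt.ne')]
    have hexp :
        Tendsto (fun n : ℕ => Real.exp (-(n * (ρ (x, y) - rhoQ ρ Q x)))) atTop (𝓝 0) :=
      Real.tendsto_exp_atBot.comp <| tendsto_neg_atTop_atBot.comp <|
        tendsto_natCast_atTop_atTop.atTop_mul_const (sub_pos.2 hlt)
    have := (ENNReal.continuous_ofReal.tendsto 0).comp hexp
    rwa [ENNReal.ofReal_zero] at this

lemma rpow_excessMGF_le (hρm : Measurable ρ) {c₀ c : ℝ} (hc₀ : 0 < c₀) (hc : c₀ ≤ c)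
    (x : S) : excessMGF ρ Q c₀ x ^ (c / c₀) ≤ excessMGF ρ Q c x := by
  refine (rpow_lintegral_le_lintegral_rpow (measurable_excessMGF_integrand hρm c₀ x).aemeasurable
    ((one_le_div hc₀).2 hc)).trans_eq (lintegral_congr fun y => ?_)
  rw [ENNReal.ofReal_rpow_of_pos (Real.exp_pos _), ← Real.exp_mul]
  congr 2
  field_simp

lemma negLog_excessMGF_le_mul (hρm : Measurable ρ) {c₀ c : ℝ} (hc₀ : 0 < c₀)
    (hc : c₀ ≤ c) (x : S) :
    negLog (excessMGF ρ Q c x) ≤ ENNReal.ofReal (c / c₀) * negLog (excessMGF ρ Q c₀ x) := by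
  rw [← negLog_rpow (div_pos (hc₀.trans_le hc) hc₀).le]
  exact negLog_antitone (rpow_excessMGF_le hρm hc₀ hc x)

lemma negLog_excessMGF_le_add (hρm : Measurable ρ) {c δ : ℝ} (hc : 0 ≤ c) (hδ : 0 ≤ δ)
    (x : S) :
    negLog (excessMGF ρ Q c x) ≤
      ENNReal.ofReal (c * δ) + negLog (Q {y | ρ (x, y) < rhoQ ρ Q x + δ}) := by
  refine (negLog_antitone (ofReal_exp_mul_measure_le_excessMGF hρm (ε := δ) hc x)).trans ?_
  rw [negLog_mul _ prob_le_one, negLog_ofReal_exp, neg_neg]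
  rw [ENNReal.ofReal_le_one, Real.exp_le_one_iff, neg_nonpos]
  positivity

end ExcessMGF

section MeanNegLogExcessMGF

variable {S T : Type*} [MeasurableSpace S] [MeasurableSpace T] {ρ : S × T → ℝ}
  {P : Measure S} {Q : Measure T}

variable (ρ P Q) in
def meanNegLogExcessMGF (c : ℝ) : ℝ≥0∞ :=
  ∫⁻ x, negLog (excessMGF ρ Q c x) ∂P

lemma meanNegLogExcessMGF_mono (hρ0 : ∀ z, 0 ≤ ρ z) : Monotone (meanNegLogExcessMGF ρ P Q) :=
  fun _ _ hcc' => lintegral_mono fun x => negLog_antitone (excessMGF_antitone hρ0 hcc' x)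

lemma meanNegLogExcessMGF_le (hρm : Measurable ρ) (c : ℝ) :
    meanNegLogExcessMGF ρ P Q c ≤ ∫⁻ x, negLog (Q {y | ρ (x, y) = rhoQ ρ Q x}) ∂P :=
  lintegral_mono fun x => negLog_antitone (measure_eq_rhoQ_le_excessMGF hρm c x)

variable [IsProbabilityMeasure Q]

lemma measurable_negLog_excessMGF (hρm : Measurable ρ) (hρ0 : ∀ z, 0 ≤ ρ z) (c : ℝ) :
    Measurable fun x => negLog (excessMGF ρ Q c x) :=
  measurable_negLog.comp (measurable_excessMGF hρm hρ0 c)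

lemma tendsto_meanNegLogExcessMGF (hρm : Measurable ρ) (hρ0 : ∀ z, 0 ≤ ρ z) :
    Tendsto (fun n : ℕ => meanNegLogExcessMGF ρ P Q n) atTop
      (𝓝 (∫⁻ x, negLog (Q {y | ρ (x, y) = rhoQ ρ Q x}) ∂P)) :=
  lintegral_tendsto_of_tendsto_of_monotone
    (fun n => (measurable_negLog_excessMGF hρm hρ0 n).aemeasurable)
    (ae_of_all _ fun x _ _ hnm => negLog_antitone (excessMGF_antitone hρ0 (Nat.cast_le.2 hnm) x))
    (ae_of_all _ fun x => (continuous_negLog.tendsto _).comp (tendsto_excessMGF hρm hρ0 x))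

lemma meanNegLogExcessMGF_le_mul (hρm : Measurable ρ) (hρ0 : ∀ z, 0 ≤ ρ z) {c₀ c : ℝ}
    (hc₀ : 0 < c₀) (hc : c₀ ≤ c) :
    meanNegLogExcessMGF ρ P Q c ≤
      ENNReal.ofReal (c / c₀) * meanNegLogExcessMGF ρ P Q c₀ := by
  rw [meanNegLogExcessMGF, meanNegLogExcessMGF,
    ← lintegral_const_mul _ (measurable_negLog_excessMGF hρm hρ0 c₀)]
  exact lintegral_mono fun x => negLog_excessMGF_le_mul hρm hc₀ hc x

lemma meanNegLogExcessMGF_le_add_mul (hρm : Measurable ρ) (hρ0 : ∀ z, 0 ≤ ρ z) {c₀ : ℝ}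
    (hc₀ : 0 < c₀) (c : ℝ) : meanNegLogExcessMGF ρ P Q c ≤
      meanNegLogExcessMGF ρ P Q c₀ +
        ENNReal.ofReal (c / c₀) * meanNegLogExcessMGF ρ P Q c₀ := by
  rcases le_total c c₀ with hc | hc
  · exact (meanNegLogExcessMGF_mono hρ0 hc).trans le_self_add
  · exact (meanNegLogExcessMGF_le_mul hρm hρ0 hc₀ hc).trans le_add_self

lemma tendsto_inv_mul_negLog_excessMGF (hρm : Measurable ρ) (x : S) :
    Tendsto (fun n : ℕ => (n : ℝ≥0∞)⁻¹ * negLog (excessMGF ρ Q n x)) atTop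
      (𝓝 0) := by
  refine ENNReal.tendsto_nhds_zero.2 fun ε hε => ?_
  obtain ⟨δ, hδ, hδpos, hδε⟩ := ENNReal.lt_iff_exists_real_btwn.1 hε
  set C := negLog (Q {y | ρ (x, y) < rhoQ ρ Q x + δ})
  have hC : C ≠ ⊤ := negLog_ne_top (measure_lt_essInf_add_ne_zero (ENNReal.ofReal_pos.1 hδpos))
  have hlim : Tendsto (fun n : ℕ => ENNReal.ofReal δ + (n : ℝ≥0∞)⁻¹ * C) atTop
      (𝓝 (ENNReal.ofReal δ)) := by
    simpa using tendsto_const_nhds.add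
      (ENNReal.Tendsto.mul_const ENNReal.tendsto_inv_nat_nhds_zero (Or.inr hC))
  filter_upwards [hlim.eventually (gt_mem_nhds hδε), eventually_ne_atTop 0] with n hn hn0
  calc (n : ℝ≥0∞)⁻¹ * negLog (excessMGF ρ Q n x)
      ≤ (n : ℝ≥0∞)⁻¹ * (ENNReal.ofReal (n * δ) + C) := by
        gcongr
        exact negLog_excessMGF_le_add hρm n.cast_nonneg hδ x
    _ = ENNReal.ofReal δ + (n : ℝ≥0∞)⁻¹ * C := by
        rw [mul_add, ENNReal.ofReal_mul n.cast_nonneg, ENNReal.ofReal_natCast, ← mul_assoc,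
          ENNReal.inv_mul_cancel (Nat.cast_ne_zero.2 hn0) (ENNReal.natCast_ne_top n), one_mul]
    _ ≤ ε := hn.le

lemma inv_mul_negLog_excessMGF_le (hρm : Measurable ρ) (n : ℕ) (x : S) :
    (n : ℝ≥0∞)⁻¹ * negLog (excessMGF ρ Q n x) ≤ negLog (excessMGF ρ Q 1 x) := by
  rcases Nat.eq_zero_or_pos n with rfl | hn
  · simp [excessMGF_zero, negLog_one]
  calc (n : ℝ≥0∞)⁻¹ * negLog (excessMGF ρ Q n x)
      ≤ (n : ℝ≥0∞)⁻¹ * (n * negLog (excessMGF ρ Q 1 x)) := by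
        gcongr
        simpa using negLog_excessMGF_le_mul hρm one_pos (Nat.one_le_cast.2 hn) x
    _ = negLog (excessMGF ρ Q 1 x) := by
        rw [← mul_assoc, ENNReal.inv_mul_cancel (Nat.cast_ne_zero.2 hn.ne')
          (ENNReal.natCast_ne_top n), one_mul]

lemma tendsto_inv_mul_meanNegLogExcessMGF (hρm : Measurable ρ) (hρ0 : ∀ z, 0 ≤ ρ z)
    (h1 : meanNegLogExcessMGF ρ P Q 1 ≠ ⊤) :
    Tendsto (fun n : ℕ => (n : ℝ≥0∞)⁻¹ * meanNegLogExcessMGF ρ P Q n) atTop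
      (𝓝 0) := by
  simp_rw [meanNegLogExcessMGF,
    ← lintegral_const_mul _ (measurable_negLog_excessMGF hρm hρ0 _)]
  simpa using tendsto_lintegral_of_dominated_convergence _
    (fun n => (measurable_negLog_excessMGF hρm hρ0 n).const_mul _)
    (fun n => ae_of_all _ (inv_mul_negLog_excessMGF_le hρm n)) h1
    (ae_of_all _ (tendsto_inv_mul_negLog_excessMGF hρm))

lemma exists_meanNegLogExcessMGF_lt (hρm : Measurable ρ) (hρ0 : ∀ z, 0 ≤ ρ z)
    (h1 : meanNegLogExcessMGF ρ P Q 1 ≠ ⊤) {δ : ℝ} (hδ : 0 < δ) :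
    ∃ n : ℕ, (0 : ℝ) < n ∧ meanNegLogExcessMGF ρ P Q n < ENNReal.ofReal (n * δ) := by
  obtain ⟨n, hn, hn1⟩ := ((tendsto_inv_mul_meanNegLogExcessMGF hρm hρ0 h1).eventually
    (gt_mem_nhds (ENNReal.ofReal_pos.2 hδ))).and (eventually_ge_atTop 1) |>.exists
  have hn0 : (n : ℝ≥0∞) ≠ 0 := by exact_mod_cast (Nat.one_le_iff_ne_zero.1 hn1)
  refine ⟨n, by exact_mod_cast hn1, ?_⟩
  calc meanNegLogExcessMGF ρ P Q n
        = n * ((n : ℝ≥0∞)⁻¹ * meanNegLogExcessMGF ρ P Q n) := by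
        rw [← mul_assoc, ENNReal.mul_inv_cancel hn0 (ENNReal.natCast_ne_top n), one_mul]
    _ < n * ENNReal.ofReal δ := ENNReal.mul_lt_mul_right hn0 (ENNReal.natCast_ne_top n) hn
    _ = ENNReal.ofReal (n * δ) := by rw [ENNReal.ofReal_mul n.cast_nonneg, ENNReal.ofReal_natCast]

end MeanNegLogExcessMGF

section LamStar

variable {S T : Type*} [MeasurableSpace S] [MeasurableSpace T] {ρ : S × T → ℝ}
  {P : Measure S} {Q : Measure T}

variable (ρ P Q) in
def meanRhoQ : ℝ≥0∞ :=
  ∫⁻ x, ENNReal.ofReal (rhoQ ρ Q x) ∂P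

lemma lintegral_exp_neg_mul_eq (hρm : Measurable ρ) (c : ℝ) (x : S) :
    ∫⁻ y, ENNReal.ofReal (Real.exp (-c * ρ (x, y))) ∂Q =
      ENNReal.ofReal (Real.exp (-c * rhoQ ρ Q x)) * excessMGF ρ Q c x := by
  rw [excessMGF, ← lintegral_const_mul _ (measurable_excessMGF_integrand hρm c x)]
  congr with y
  rw [← ENNReal.ofReal_mul (Real.exp_nonneg _), ← Real.exp_add]
  ring_nf

lemma le_LamStar {c : ℝ} (hc : 0 ≤ c) (D : ℝ) :
    ((-c * D : ℝ) : EReal) - Lam ρ P Q (-c) ≤ LamStar ρ P Q D :=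
  le_iSup₂ (f := fun l (_ : l ∈ Iic (0 : ℝ)) => ((l * D : ℝ) : EReal) - Lam ρ P Q l) (-c)
    (neg_nonpos.2 hc)

lemma LamStar_le {D : ℝ} {B : EReal}
    (h : ∀ c, 0 ≤ c → ((-c * D : ℝ) : EReal) - Lam ρ P Q (-c) ≤ B) :
    LamStar ρ P Q D ≤ B :=
  iSup₂_le fun l hl => by simpa using h (-l) (neg_nonneg.2 hl)

variable [IsProbabilityMeasure Q]

lemma negLog_lintegral_exp_neg_mul (hρm : Measurable ρ) (hρ0 : ∀ z, 0 ≤ ρ z) {c : ℝ}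
    (hc : 0 ≤ c) (x : S) :
    negLog (∫⁻ y, ENNReal.ofReal (Real.exp (-c * ρ (x, y))) ∂Q) =
      ENNReal.ofReal c * ENNReal.ofReal (rhoQ ρ Q x) + negLog (excessMGF ρ Q c x) := by
  rw [lintegral_exp_neg_mul_eq hρm, negLog_mul _ (excessMGF_le_one hρ0 hc x), negLog_ofReal_exp,
    neg_mul, neg_neg, ENNReal.ofReal_mul hc]
  rw [ENNReal.ofReal_le_one, Real.exp_le_one_iff, neg_mul, neg_nonpos]
  exact mul_nonneg hc (rhoQ_nonneg hρ0 x)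

lemma Lam_neg (hρm : Measurable ρ) (hρ0 : ∀ z, 0 ≤ ρ z) {c : ℝ} (hc : 0 ≤ c) :
    Lam ρ P Q (-c) =
      -((ENNReal.ofReal c * meanRhoQ ρ P Q + meanNegLogExcessMGF ρ P Q c : ℝ≥0∞) :
        EReal) := by
  rcases hc.eq_or_lt with rfl | hc
  · simp [Lam, posLog, meanNegLogExcessMGF, excessMGF_zero, negLog_one]
  rw [Lam, if_neg (by linarith), lintegral_congr (negLog_lintegral_exp_neg_mul hρm hρ0 hc.le),
    lintegral_add_left ((measurable_rhoQ hρm hρ0).ennreal_ofReal.const_mul _),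
    lintegral_const_mul _ (measurable_rhoQ hρm hρ0).ennreal_ofReal]
  rfl

lemma neg_mul_sub_Lam_neg (hρm : Measurable ρ) (hρ0 : ∀ z, 0 ≤ ρ z) {c : ℝ} (hc : 0 ≤ c)
    (D : ℝ) : ((-c * D : ℝ) : EReal) - Lam ρ P Q (-c) = ((-c * D : ℝ) : EReal) +
      ((ENNReal.ofReal c * meanRhoQ ρ P Q + meanNegLogExcessMGF ρ P Q c : ℝ≥0∞) :
        EReal) := by
  rw [Lam_neg hρm hρ0 hc, sub_eq_add_neg, neg_neg]

lemma neg_mul_sub_Lam_neg_of_ne_top (hρm : Measurable ρ) (hρ0 : ∀ z, 0 ≤ ρ z)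
    (hm : meanRhoQ ρ P Q ≠ ⊤) {c : ℝ} (hc : 0 ≤ c) (D : ℝ) :
    ((-c * D : ℝ) : EReal) - Lam ρ P Q (-c) =
      ((c * ((meanRhoQ ρ P Q).toReal - D) : ℝ) : EReal) + meanNegLogExcessMGF ρ P Q c := by
  rw [neg_mul_sub_Lam_neg hρm hρ0 hc, EReal.coe_ennreal_add, ← add_assoc,
    ← ENNReal.ofReal_toReal hm, ← ENNReal.ofReal_mul hc, EReal.coe_ennreal_ofReal,
    max_eq_left (by positivity), ← EReal.coe_add, ENNReal.toReal_ofReal ENNReal.toReal_nonneg]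
  congr 2
  ring

lemma meanRhoQ_ne_top_of_LamStar_ne_top (hρm : Measurable ρ) (hρ0 : ∀ z, 0 ≤ ρ z) {D : ℝ}
    (hD : LamStar ρ P Q D ≠ ⊤) :
    meanRhoQ ρ P Q ≠ ⊤ ∧ meanNegLogExcessMGF ρ P Q 1 ≠ ⊤ := by
  have h := le_LamStar (P := P) (Q := Q) (ρ := ρ) zero_le_one D
  rw [neg_mul_sub_Lam_neg hρm hρ0 zero_le_one] at h
  have hsum : ENNReal.ofReal 1 * meanRhoQ ρ P Q + meanNegLogExcessMGF ρ P Q 1 ≠ ⊤ :=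
      fun htop => by
    rw [htop, EReal.coe_ennreal_top, EReal.coe_add_top, top_le_iff] at h
    exact hD h
  simpa [ENNReal.add_eq_top, not_or] using hsum

section FiniteMean

variable (hρm : Measurable ρ) (hρ0 : ∀ z, 0 ≤ ρ z) (hm : meanRhoQ ρ P Q ≠ ⊤)
include hρm hρ0 hm

lemma LamStar_eq_top_of_lt {D : ℝ} (hD : D < (meanRhoQ ρ P Q).toReal) :
    LamStar ρ P Q D = ⊤ := by
  have hlin : Tendsto (fun c : ℝ => ((c * ((meanRhoQ ρ P Q).toReal - D) : ℝ) : EReal)) atTop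
      (𝓝 ⊤) :=
    EReal.tendsto_coe_nhds_top_iff.2 (tendsto_id.atTop_mul_const (sub_pos.2 hD))
  refine top_le_iff.1 (le_of_tendsto hlin ((eventually_ge_atTop 0).mono fun c hc => ?_))
  calc ((c * ((meanRhoQ ρ P Q).toReal - D) : ℝ) : EReal)
      ≤ ((c * ((meanRhoQ ρ P Q).toReal - D) : ℝ) : EReal) + meanNegLogExcessMGF ρ P Q c :=
        le_add_of_nonneg_right (EReal.coe_ennreal_nonneg _)
    _ ≤ LamStar ρ P Q D := (neg_mul_sub_Lam_neg_of_ne_top hρm hρ0 hm hc D).symm.trans_le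
        (le_LamStar hc D)

lemma LamStar_meanRhoQ :
    LamStar ρ P Q (meanRhoQ ρ P Q).toReal =
      ((∫⁻ x, negLog (Q {y | ρ (x, y) = rhoQ ρ Q x}) ∂P : ℝ≥0∞) : EReal) := by
  have hterm (c : ℝ) (hc : 0 ≤ c) : ((-c * (meanRhoQ ρ P Q).toReal : ℝ) : EReal) -
      Lam ρ P Q (-c) = meanNegLogExcessMGF ρ P Q c := by
    rw [neg_mul_sub_Lam_neg_of_ne_top hρm hρ0 hm hc, sub_self, mul_zero, EReal.coe_zero, zero_add]
  refine le_antisymm (LamStar_le fun c hc => ?_) ?_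
  · rw [hterm c hc]
    exact EReal.coe_ennreal_le_coe_ennreal_iff.2 (meanNegLogExcessMGF_le hρm c)
  · refine le_of_tendsto' ((continuous_coe_ennreal_ereal.tendsto _).comp
      (tendsto_meanNegLogExcessMGF hρm hρ0)) fun n => ?_
    rw [Function.comp_apply, ← hterm n n.cast_nonneg]
    exact le_LamStar n.cast_nonneg _

lemma LamStar_ne_top_of_gt (h1 : meanNegLogExcessMGF ρ P Q 1 ≠ ⊤) {D : ℝ}
    (hD : (meanRhoQ ρ P Q).toReal < D) : LamStar ρ P Q D ≠ ⊤ := by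
  obtain ⟨n, hn0, hGn⟩ := exists_meanNegLogExcessMGF_lt hρm hρ0 h1 (sub_pos.2 hD)
  set m := (meanRhoQ ρ P Q).toReal
  set G := meanNegLogExcessMGF ρ P Q
  set g := (G n).toReal
  have hg : g < n * (D - m) := ENNReal.toReal_lt_of_lt_ofReal hGn
  -- `G c ≤ G n (1 + c / n)` and `G n < n (D - m)` bound every term of the supremum by `G n`.
  refine ne_top_of_le_ne_top (EReal.coe_ne_top g) (LamStar_le fun c hc => ?_)
  have hGc : (G c : EReal) ≤ ((g + c / n * g : ℝ) : EReal) := by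
    have : G c ≤ G n + ENNReal.ofReal (c / n) * G n :=
      meanNegLogExcessMGF_le_add_mul hρm hρ0 hn0 c
    rw [← ENNReal.ofReal_toReal hGn.ne_top, ← ENNReal.ofReal_mul (by positivity),
      ← ENNReal.ofReal_add (by positivity) (by positivity)] at this
    have h := EReal.coe_ennreal_le_coe_ennreal_iff.2 this
    rwa [EReal.coe_ennreal_ofReal, max_eq_left (by positivity)] at h
  have hcg : c / n * g ≤ c * (D - m) := by
    rw [div_mul_eq_mul_div, div_le_iff₀ hn0]
    nlinarith
  calc ((-c * D : ℝ) : EReal) - Lam ρ P Q (-c) = ((c * (m - D) : ℝ) : EReal) + G c :=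
        neg_mul_sub_Lam_neg_of_ne_top hρm hρ0 hm hc D
    _ ≤ ((c * (m - D) : ℝ) : EReal) + ((g + c / n * g : ℝ) : EReal) := by gcongr
    _ ≤ g := by
        rw [← EReal.coe_add, EReal.coe_le_coe_iff]
        linarith

lemma DminPQ_eq (h1 : meanNegLogExcessMGF ρ P Q 1 ≠ ⊤) :
    DminPQ ρ P Q = (meanRhoQ ρ P Q).toReal :=
  ((isGLB_Ioi (a := (meanRhoQ ρ P Q).toReal)).of_subset_of_superset isGLB_Ici
    (fun _ hD => LamStar_ne_top_of_gt hρm hρ0 hm h1 hD)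
    (fun _ hD => not_lt.1 fun hlt => hD (LamStar_eq_top_of_lt hρm hρ0 hm hlt))).csInf_eq
    ⟨_, LamStar_ne_top_of_gt hρm hρ0 hm h1 (lt_add_one _)⟩

end FiniteMean

end LamStar

theorem stmt6_general {S T : Type*} [MeasurableSpace S]
    [MeasurableSpace T]
    (ρ : S × T → ℝ) (hρm : Measurable ρ) (hρ0 : ∀ z, 0 ≤ ρ z)
    (P : Measure S) (Q : Measure T) [IsProbabilityMeasure Q]
    (hne : {D : ℝ | LamStar ρ P Q D ≠ ⊤}.Nonempty) :
    LamStar ρ P Q (DminPQ ρ P Q) =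
      ((∫⁻ x, negLog (Q {y | ρ (x, y) = rhoQ ρ Q x}) ∂P : ℝ≥0∞) : EReal) := by
  obtain ⟨D₀, hD₀⟩ := hne
  obtain ⟨hm, h1⟩ := meanRhoQ_ne_top_of_LamStar_ne_top hρm hρ0 hD₀
  rw [DminPQ_eq hρm hρ0 hm h1, LamStar_meanRhoQ hρm hρ0 hm]

/-- if `D_min = inf {D : Λ*(P,Q,D) < ∞}` is finite, then
`Λ*(P,Q,D_min) = E_X[-log Q{y : ρ(X,y) = ρ_Q(X)}]`. -/
theorem stmt6 {S T : Type*} [MeasurableSpace S] [StandardBorelSpace S]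
    [MeasurableSpace T] [StandardBorelSpace T]
    (ρ : S × T → ℝ) (hρm : Measurable ρ) (hρ0 : ∀ z, 0 ≤ ρ z)
    (P : Measure S) (Q : Measure T) [IsProbabilityMeasure P] [IsProbabilityMeasure Q]
    (hne : {D : ℝ | LamStar ρ P Q D ≠ ⊤}.Nonempty) :
    LamStar ρ P Q (DminPQ ρ P Q) =
      ((∫⁻ x, negLog (Q {y | ρ (x, y) = rhoQ ρ Q x}) ∂P : ℝ≥0∞) : EReal) :=
  stmt6_general ρ hρm hρ0 P Q hne

end
end

section
/- Let Z be a nonnegative real-valued random variable and define Λ*(D) := sup_{λ ≤ 0}[λD − log E e^{λZ}]. Then log Prob{Z ≤ D} ≤ −Λ*(D) for every D, with equality whenever D ≤ essinf Z. Moreover, log Prob{Z ≤ D} > −∞ if and only if Λ*(D) < ∞. -/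
open MeasureTheory Filter Set Topology Classical
open scoped ENNReal NNReal

noncomputable section

/-!
Since `E e^{λZ} = e^{λD} E e^{λ(Z-D)}`, the transform is
`Λ*(D) = -log inf_{λ ≤ 0} E e^{λ(Z-D)}`. Every `E e^{λ(Z-D)}` with `λ ≤ 0` dominates `P(Z ≤ D)` (Chernoff), and when `Z ≥ D` a.s. they
decrease to `P(Z ≤ D)` as `λ → -∞` by dominated convergence. The finiteness criterion follows
because `P(Z ≤ D) = 0` forces `Z > D` a.s., which puts us in the case of equality.
-/

lemma eLog_eq_log (t : ℝ≥0∞) : eLog t = ENNReal.log t := by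
  unfold eLog ENNReal.log
  congr

lemma EReal.coe_sub_add_cancel_left (a : ℝ) (x : EReal) : (a : EReal) - (a + x) = -x := by
  induction x with
  | bot => simp
  | top => simp
  | coe x => norm_cast; ring

lemma ENNReal.neg_log_iInf₂ {ι : Type*} {κ : ι → Sort*} (f : ∀ i, κ i → ℝ≥0∞) :
    -ENNReal.log (⨅ (i) (j), f i j) = ⨆ (i) (j), -ENNReal.log (f i j) :=
  (ENNReal.logOrderIso.trans EReal.negOrderIso).map_iInf₂ f

lemma tendsto_ofReal_exp_neg_nat_mul {x : ℝ} (hx : 0 ≤ x) :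
    Tendsto (fun n : ℕ => ENNReal.ofReal (Real.exp (-n * x))) atTop
      (𝓝 ((Iic (0 : ℝ)).indicator 1 x)) := by
  rcases hx.eq_or_lt with rfl | hx
  · simp
  · have hexp : Tendsto (fun n : ℕ => Real.exp (-n * x)) atTop (𝓝 0) := by
      refine Real.tendsto_exp_atBot.comp ?_
      simp_rw [neg_mul]
      exact tendsto_neg_atTop_atBot.comp (tendsto_natCast_atTop_atTop.atTop_mul_const hx)
    simpa [hx.not_ge] using (ENNReal.tendsto_ofReal hexp)

section

variable {Ω : Type*} [MeasurableSpace Ω] (μ : Measure Ω)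

lemma lintegral_ofReal_exp_mul_eq_mul_sub (Z : Ω → ℝ) (l D : ℝ) :
    ∫⁻ ω, ENNReal.ofReal (Real.exp (l * Z ω)) ∂μ =
      ENNReal.ofReal (Real.exp (l * D)) *
        ∫⁻ ω, ENNReal.ofReal (Real.exp (l * (Z ω - D))) ∂μ := by
  rw [← lintegral_const_mul' _ _ ENNReal.ofReal_ne_top]
  congr 1 with ω
  rw [← ENNReal.ofReal_mul (Real.exp_nonneg _), ← Real.exp_add]
  ring_nf

lemma FLT_log_lintegral_exp (Z : Ω → ℝ) (D : ℝ) :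
    FLT (fun l => ENNReal.log (∫⁻ ω, ENNReal.ofReal (Real.exp (l * Z ω)) ∂μ)) D =
      -ENNReal.log (⨅ l ∈ Iic (0 : ℝ), ∫⁻ ω, ENNReal.ofReal (Real.exp (l * (Z ω - D))) ∂μ) := by
  simp only [FLT, ENNReal.neg_log_iInf₂, lintegral_ofReal_exp_mul_eq_mul_sub μ Z _ D,
    ENNReal.log_mul_add, ENNReal.log_ofReal_of_pos (Real.exp_pos _), Real.log_exp,
    EReal.coe_sub_add_cancel_left]

variable {μ} {Y : Ω → ℝ}

lemma measure_nonpos_le_lintegral_exp (hY : Measurable Y) {l : ℝ} (hl : l ≤ 0) :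
    μ {ω | Y ω ≤ 0} ≤ ∫⁻ ω, ENNReal.ofReal (Real.exp (l * Y ω)) ∂μ := by
  refine le_trans (measure_mono fun ω hω => ?_)
    (one_mul (μ _) ▸ mul_meas_ge_le_lintegral₀ (hY.const_mul l).exp.ennreal_ofReal.aemeasurable 1)
  simp only [Set.mem_ofPred_eq, ENNReal.one_le_ofReal, Real.one_le_exp_iff] at hω ⊢
  exact mul_nonneg_of_nonpos_of_nonpos hl hω

lemma tendsto_lintegral_exp_neg_nat_mul [IsFiniteMeasure μ] (hY : Measurable Y)
    (hY0 : ∀ᵐ ω ∂μ, 0 ≤ Y ω) :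
    Tendsto (fun n : ℕ => ∫⁻ ω, ENNReal.ofReal (Real.exp (-n * Y ω)) ∂μ) atTop
      (𝓝 (μ {ω | Y ω ≤ 0})) := by
  rw [← lintegral_indicator_one (measurableSet_le hY measurable_const)]
  refine tendsto_lintegral_of_dominated_convergence 1
    (fun n => (hY.const_mul _).exp.ennreal_ofReal) (fun n => ?_) (by simp) ?_
  · filter_upwards [hY0] with ω hω
    simpa using mul_nonneg (Nat.cast_nonneg n) hω
  · filter_upwards [hY0] with ω hω using tendsto_ofReal_exp_neg_nat_mul hω

lemma iInf_lintegral_exp_eq_measure_nonpos [IsFiniteMeasure μ] (hY : Measurable Y)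
    (hY0 : ∀ᵐ ω ∂μ, 0 ≤ Y ω) :
    ⨅ l ∈ Iic (0 : ℝ), ∫⁻ ω, ENNReal.ofReal (Real.exp (l * Y ω)) ∂μ = μ {ω | Y ω ≤ 0} :=
  le_antisymm
    (ge_of_tendsto' (tendsto_lintegral_exp_neg_nat_mul hY hY0) fun n =>
      iInf₂_le (-(n : ℝ)) (by simp))
    (le_iInf₂ fun _ hl => measure_nonpos_le_lintegral_exp hY hl)

end

/-- for a nonnegative random variable `Z` and
`Λ*(D) = sup_{λ ≤ 0}[λD - log E e^{λZ}]`: `log P(Z ≤ D) ≤ -Λ*(D)` for every `D`,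
with equality whenever `D ≤ essinf Z`; moreover `log P(Z ≤ D) > -∞ ↔ Λ*(D) < ∞`. -/
theorem stmt18 {Ω : Type*} [MeasurableSpace Ω] (ℙ : Measure Ω) [IsProbabilityMeasure ℙ]
    (Z : Ω → ℝ) (hZm : Measurable Z) (hZ0 : ∀ ω, 0 ≤ Z ω) (D : ℝ) :
    eLog (ℙ {ω | Z ω ≤ D}) ≤
      -(FLT (fun l => eLog (∫⁻ ω, ENNReal.ofReal (Real.exp (l * Z ω)) ∂ℙ)) D) ∧
    (D ≤ essInf Z ℙ →
      eLog (ℙ {ω | Z ω ≤ D}) =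
        -(FLT (fun l => eLog (∫⁻ ω, ENNReal.ofReal (Real.exp (l * Z ω)) ∂ℙ)) D)) ∧
    (eLog (ℙ {ω | Z ω ≤ D}) ≠ ⊥ ↔
      FLT (fun l => eLog (∫⁻ ω, ENNReal.ofReal (Real.exp (l * Z ω)) ∂ℙ)) D ≠ ⊤) := by
  have hY : Measurable fun ω => Z ω - D := hZm.sub_const D
  have hS : {ω | Z ω ≤ D} = {ω | Z ω - D ≤ 0} := by simp_rw [sub_nonpos]
  have hle : ℙ {ω | Z ω ≤ D} ≤
      ⨅ l ∈ Iic (0 : ℝ), ∫⁻ ω, ENNReal.ofReal (Real.exp (l * (Z ω - D))) ∂ℙ :=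
    hS ▸ le_iInf₂ fun _ hl => measure_nonpos_le_lintegral_exp hY hl
  have heq (h : ∀ᵐ ω ∂ℙ, D ≤ Z ω) :
      ⨅ l ∈ Iic (0 : ℝ), ∫⁻ ω, ENNReal.ofReal (Real.exp (l * (Z ω - D))) ∂ℙ =
        ℙ {ω | Z ω ≤ D} :=
    hS ▸ iInf_lintegral_exp_eq_measure_nonpos hY (h.mono fun _ => sub_nonneg.mpr)
  simp only [eLog_eq_log, FLT_log_lintegral_exp, neg_neg]
  refine ⟨ENNReal.log_le_log hle, fun hD => congrArg _ (heq ?_).symm, ?_⟩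
  · filter_upwards [ae_essInf_le (isBoundedUnder_of ⟨0, hZ0⟩)] with ω hω using hD.trans hω
  · rw [Ne, Ne, ENNReal.log_eq_bot_iff, EReal.neg_eq_top_iff, ENNReal.log_eq_bot_iff]
    refine ⟨fun hp hq => hp (nonpos_iff_eq_zero.mp (hle.trans hq.le)), fun hq hp => hq ?_⟩
    rw [heq (ae_iff.mpr (measure_mono_null (fun ω h => (not_le.mp h).le) hp)), hp]

end
end

section
/- Let (U_n)_{n≥1} be a real-valued stationary and ergodic process with E U_1 = 0 and Prob{U_1 ≠ 0} > 0, and define the random walk W_n := Σ_{k=1}^n U_k. Then Prob{W_n > 0 infinitely often} > 0 and Prob{W_n ≥ 0 infinitely often} = 1. -/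
open MeasureTheory Filter Set Topology Classical
open scoped ENNReal NNReal

noncomputable section

/-!
Let `M = sup_{n ≥ 0} S_n` be the supremum of the Birkhoff sums `S_n = ∑_{k<n} u ∘ Tᵏ`.
Finiteness of `M` is a `T`-invariant event. If `M = ∞` a.e., then `S_n > 0` infinitely often.
Otherwise `M = max 0 (u + M ∘ T)` a.e., so `M - M ∘ T ≥ u`; as `T` preserves `μ` and `∫ u = 0`,
truncating `M` and applying Fatou's lemma forces `M - M ∘ T = u`, i.e. `M = S_N + M ∘ Tᴺ` for all
`N`. Thus `M = sup_{n ≥ N} S_n` for every `N`, so `S_n > 0` infinitely often where `M > 0`, a set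
of positive measure since `u` is not a.e. zero; where `M = 0`, Poincaré recurrence to `{M = 0}`
gives `S_n = M - M ∘ Tⁿ = 0` infinitely often.
-/

lemma frequently_lt_of_not_bddAbove_range {β : Type*} [LinearOrder β] {s : ℕ → β}
    (h : ¬BddAbove (range s)) (c : β) : ∃ᶠ n in atTop, c < s n := by
  by_contra hc
  simp only [not_frequently, not_lt] at hc
  exact h (isBoundedUnder_of_eventually_le hc).bddAbove_range

lemma neg_abs_le_min_sub_min {a b c u : ℝ} (h : u ≤ a - b) : -|u| ≤ min a c - min b c := by
  rw [min_def, min_def]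
  split_ifs <;> linarith [neg_abs_le u, abs_nonneg u]

section BirkhoffSup

variable {α : Type*} {T : α → α} {u : α → ℝ} {x : α}

lemma measurable_birkhoffSum {M : Type*} [AddCommMonoid M] [MeasurableSpace M] [MeasurableAdd₂ M]
    [MeasurableSpace α] {g : α → M} (hT : Measurable T) (hg : Measurable g) (n : ℕ) :
    Measurable (birkhoffSum T g n) :=
  Finset.measurable_fun_sum _ fun k _ => hg.comp (hT.iterate k)

lemma bddAbove_birkhoffSum_apply_iff :
    BddAbove (range fun n => birkhoffSum T u n (T x)) ↔
      BddAbove (range fun n => birkhoffSum T u n x) := by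
  constructor
  · rintro ⟨c, hc⟩
    refine ⟨max 0 (u x + c), ?_⟩
    rintro _ ⟨n, rfl⟩
    cases n with
    | zero => simp [birkhoffSum_zero]
    | succ n =>
      show birkhoffSum T u (n + 1) x ≤ _
      rw [birkhoffSum_succ']
      exact le_max_of_le_right (by linarith [hc ⟨n, rfl⟩])
  · rintro ⟨c, hc⟩
    refine ⟨c - u x, ?_⟩
    rintro _ ⟨n, rfl⟩
    have : birkhoffSum T u (n + 1) x ≤ c := hc ⟨n + 1, rfl⟩
    rw [birkhoffSum_succ'] at this
    exact le_sub_iff_add_le'.2 this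

/-- Since `birkhoffSum T u 0 = 0`, this is `max 0 (sup_{n ≥ 1} …)`; it is `0`, the junk value
of `⨆` on `ℝ`, when the sums are unbounded above. -/
def birkhoffSup (T : α → α) (u : α → ℝ) (x : α) : ℝ := ⨆ n, birkhoffSum T u n x

lemma birkhoffSup_nonneg (T : α → α) (u : α → ℝ) (x : α) : 0 ≤ birkhoffSup T u x := by
  by_cases h : BddAbove (range fun n => birkhoffSum T u n x)
  · exact le_ciSup_of_le h 0 (birkhoffSum_zero T u x).ge
  · rw [birkhoffSup, Real.iSup_of_not_bddAbove h]

lemma birkhoffSup_eq_max (hx : BddAbove (range fun n => birkhoffSum T u n x)) :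
    birkhoffSup T u x = max 0 (u x + birkhoffSup T u (T x)) := by
  have hTx := bddAbove_birkhoffSum_apply_iff.2 hx
  apply le_antisymm
  · refine ciSup_le fun n => ?_
    cases n with
    | zero => simp [birkhoffSum_zero]
    | succ n =>
      rw [birkhoffSum_succ']
      exact le_max_of_le_right (add_le_add_right (le_ciSup hTx n) _)
  · refine max_le (birkhoffSup_nonneg T u x) ?_
    rw [← le_sub_iff_add_le']
    refine ciSup_le fun n => ?_
    have := le_ciSup hx (n + 1)
    rw [birkhoffSum_succ'] at this
    simp only [birkhoffSup]
    linarith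

lemma frequently_birkhoffSum_pos
    (hx : ∀ n, birkhoffSup T u x = birkhoffSum T u n x + birkhoffSup T u (T^[n] x))
    (hpos : 0 < birkhoffSup T u x) : ∃ᶠ n in atTop, 0 < birkhoffSum T u n x := by
  refine frequently_atTop.2 fun N => ?_
  have : -birkhoffSum T u N x < birkhoffSup T u (T^[N] x) := by linarith [hx N]
  obtain ⟨k, hk⟩ := exists_lt_of_lt_ciSup this
  refine ⟨N + k, N.le_add_right k, ?_⟩
  rw [birkhoffSum_add]
  linarith

lemma measurable_birkhoffSup [MeasurableSpace α] (hT : Measurable T) (hu : Measurable u) :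
    Measurable (birkhoffSup T u) :=
  Measurable.iSup (measurable_birkhoffSum hT hu)

end BirkhoffSup

section Coboundary

variable {α : Type*} [MeasurableSpace α] {μ : Measure α} [IsFiniteMeasure μ] {T : α → α}
  {g u : α → ℝ}

lemma MeasureTheory.MeasurePreserving.lintegral_ofReal_sub_comp_add_abs_le
    (hT : MeasurePreserving T μ μ) (hg : Measurable g) (hg0 : 0 ≤ g) (hu : Integrable u μ)
    (hle : ∀ᵐ x ∂μ, u x ≤ g x - g (T x)) :
    ∫⁻ x, ENNReal.ofReal (g x - g (T x) + |u x|) ∂μ ≤ ENNReal.ofReal (∫ x, |u x| ∂μ) := by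
  set v : ℕ → α → ℝ := fun c x => min (g x) c - min (g (T x)) c + |u x| with hv
  have htrunc_int (c : ℕ) : Integrable (fun x => min (g x) c) μ :=
    (integrable_const (c : ℝ)).mono' (hg.min measurable_const).aestronglyMeasurable
      (ae_of_all _ fun x => by
        rw [Real.norm_eq_abs, abs_of_nonneg (le_min (hg0 x) c.cast_nonneg)]
        exact min_le_right _ _)
  have htrunc_comp_int (c : ℕ) : Integrable (fun x => min (g (T x)) c) μ :=
    hT.integrable_comp_of_integrable (htrunc_int c)
  have hv_int (c : ℕ) : Integrable (v c) μ :=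
    ((htrunc_int c).sub (htrunc_comp_int c)).add hu.abs
  have hv_integral (c : ℕ) : ∫ x, v c x ∂μ = ∫ x, |u x| ∂μ := by
    have hcomp : ∫ x, min (g (T x)) c ∂μ = ∫ x, min (g x) c ∂μ := by
      rw [← integral_map hT.aemeasurable (hg.min measurable_const).aestronglyMeasurable,
        hT.map_eq]
    have hdiff_int : Integrable (fun x => min (g x) c - min (g (T x)) c) μ :=
      (htrunc_int c).sub (htrunc_comp_int c)
    show ∫ x, (min (g x) c - min (g (T x)) c + |u x|) ∂μ = _
    rw [integral_add hdiff_int hu.abs, integral_sub (htrunc_int c) (htrunc_comp_int c), hcomp,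
      sub_self, zero_add]
  have hv_nonneg (c : ℕ) : 0 ≤ᵐ[μ] v c :=
    hle.mono fun x hx => by
      have := neg_abs_le_min_sub_min (c := (c : ℝ)) hx
      show 0 ≤ min (g x) c - min (g (T x)) c + |u x|
      linarith
  have hv_lim (x : α) : liminf (fun c => ENNReal.ofReal (v c x)) atTop =
      ENNReal.ofReal (g x - g (T x) + |u x|) := by
    refine (tendsto_const_nhds.congr' ?_).liminf_eq
    obtain ⟨N, hN⟩ := exists_nat_ge (max (g x) (g (T x)))
    filter_upwards [eventually_ge_atTop N] with c hc
    have hc' : max (g x) (g (T x)) ≤ c := hN.trans (Nat.cast_le.2 hc)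
    simp only [hv, min_eq_left (le_of_max_le_left hc'), min_eq_left (le_of_max_le_right hc')]
  calc ∫⁻ x, ENNReal.ofReal (g x - g (T x) + |u x|) ∂μ
      = ∫⁻ x, liminf (fun c => ENNReal.ofReal (v c x)) atTop ∂μ := by simp only [hv_lim]
    _ ≤ liminf (fun c => ∫⁻ x, ENNReal.ofReal (v c x) ∂μ) atTop :=
        lintegral_liminf_le' fun c => (hv_int c).aemeasurable.ennreal_ofReal
    _ = ENNReal.ofReal (∫ x, |u x| ∂μ) := by
        simp only [← ofReal_integral_eq_lintegral_ofReal (hv_int _) (hv_nonneg _), hv_integral,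
          liminf_const]

lemma MeasureTheory.MeasurePreserving.sub_comp_ae_eq_of_le (hT : MeasurePreserving T μ μ)
    (hg : Measurable g) (hg0 : 0 ≤ g) (hu : Integrable u μ)
    (hle : ∀ᵐ x ∂μ, u x ≤ g x - g (T x)) (hmean : 0 ≤ ∫ x, u x ∂μ) :
    (fun x => g x - g (T x)) =ᵐ[μ] u := by
  have hbound := hT.lintegral_ofReal_sub_comp_add_abs_le hg hg0 hu hle
  have hsplit : ∀ᵐ x ∂μ, ENNReal.ofReal (g x - g (T x) + |u x|) =
      ENNReal.ofReal (g x - g (T x) - u x) + ENNReal.ofReal (u x + |u x|) :=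
    hle.mono fun x hx => by
      rw [← ENNReal.ofReal_add (by linarith) (by linarith [neg_abs_le (u x)])]
      congr 1
      ring
  have hu_abs : ∫⁻ x, ENNReal.ofReal (u x + |u x|) ∂μ =
      ENNReal.ofReal (∫ x, u x ∂μ + ∫ x, |u x| ∂μ) := by
    rw [← integral_add hu hu.abs, ofReal_integral_eq_lintegral_ofReal (f := fun x => u x + |u x|)
      (hu.add hu.abs) (ae_of_all _ fun x => neg_le_iff_add_nonneg.1 (neg_abs_le (u x)))]
  have hdiff_meas : AEMeasurable (fun x => ENNReal.ofReal (g x - g (T x) - u x)) μ :=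
    ((hg.sub (hg.comp hT.measurable)).aemeasurable.sub hu.aemeasurable).ennreal_ofReal
  have hzero : ∫⁻ x, ENNReal.ofReal (g x - g (T x) - u x) ∂μ = 0 := by
    rw [lintegral_congr_ae hsplit, lintegral_add_left' hdiff_meas, hu_abs] at hbound
    have := hbound.trans (ENNReal.ofReal_le_ofReal (le_add_of_nonneg_left hmean))
    exact le_zero_iff.1 ((ENNReal.add_le_add_iff_right ENNReal.ofReal_ne_top).1
      (by rwa [zero_add]))
  filter_upwards [(lintegral_eq_zero_iff' hdiff_meas).1 hzero, hle] with x h0 hx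
  rw [Pi.zero_apply, ENNReal.ofReal_eq_zero] at h0
  linarith

end Coboundary

section Recurrence

variable {α : Type*} [MeasurableSpace α] {μ : Measure α} {T : α → α} {u : α → ℝ}

lemma MeasureTheory.MeasurePreserving.ae_birkhoffSup_eq_add [IsFiniteMeasure μ]
    (hT : MeasurePreserving T μ μ) (hum : Measurable u) (hu : Integrable u μ)
    (hmean : 0 ≤ ∫ x, u x ∂μ)
    (hbdd : ∀ᵐ x ∂μ, BddAbove (range fun n => birkhoffSum T u n x)) :
    ∀ᵐ x ∂μ, ∀ n, birkhoffSup T u x = birkhoffSum T u n x + birkhoffSup T u (T^[n] x) := by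
  have hle : ∀ᵐ x ∂μ, u x ≤ birkhoffSup T u x - birkhoffSup T u (T x) :=
    hbdd.mono fun x hx => by
      rw [birkhoffSup_eq_max hx]
      linarith [le_max_right 0 (u x + birkhoffSup T u (T x))]
  have hcob := hT.sub_comp_ae_eq_of_le (measurable_birkhoffSup hT.measurable hum)
    (birkhoffSup_nonneg T u) hu hle hmean
  have hstep : ∀ᵐ x ∂μ, ∀ k,
      birkhoffSup T u (T^[k] x) = u (T^[k] x) + birkhoffSup T u (T^[k + 1] x) :=
    ae_all_iff.2 fun k => ((hT.iterate k).quasiMeasurePreserving.ae hcob).mono fun x hx => by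
      rw [Function.iterate_succ_apply']
      linarith [hx]
  filter_upwards [hstep] with x hx n
  induction n with
  | zero => simp [birkhoffSum_zero]
  | succ n ih => linarith [birkhoffSum_succ T u n x, hx n]

lemma MeasureTheory.MeasurePreserving.ae_frequently_birkhoffSum_nonneg [IsFiniteMeasure μ]
    (hT : MeasurePreserving T μ μ) (hum : Measurable u)
    (hcocycle : ∀ᵐ x ∂μ, ∀ n,
      birkhoffSup T u x = birkhoffSum T u n x + birkhoffSup T u (T^[n] x)) :
    ∀ᵐ x ∂μ, ∃ᶠ n in atTop, 0 ≤ birkhoffSum T u n x := by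
  have hzero : MeasurableSet {x | birkhoffSup T u x = 0} :=
    measurable_birkhoffSup hT.measurable hum (measurableSet_singleton 0)
  filter_upwards [hcocycle,
    hT.conservative.ae_mem_imp_frequently_image_mem hzero.nullMeasurableSet] with x hx hrec
  rcases (birkhoffSup_nonneg T u x).eq_or_lt with h0 | hpos
  · refine (hrec h0.symm).mono fun n hn => ?_
    have hn : birkhoffSup T u (T^[n] x) = 0 := hn
    linarith [hx n]
  · exact (frequently_birkhoffSum_pos hx hpos).mono fun _ => le_of_lt

lemma MeasureTheory.MeasurePreserving.measure_birkhoffSup_pos (hT : MeasurePreserving T μ μ)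
    (hcocycle : ∀ᵐ x ∂μ, ∀ n,
      birkhoffSup T u x = birkhoffSum T u n x + birkhoffSup T u (T^[n] x))
    (hne : 0 < μ {x | u x ≠ 0}) : 0 < μ {x | 0 < birkhoffSup T u x} := by
  by_contra! h
  have hM0 : ∀ᵐ x ∂μ, birkhoffSup T u x = 0 :=
    (measure_eq_zero_iff_ae_notMem.1 (le_zero_iff.1 h)).mono fun x hx =>
      le_antisymm (not_lt.1 hx) (birkhoffSup_nonneg T u x)
  have hu0 : ∀ᵐ x ∂μ, u x = 0 := by
    filter_upwards [hcocycle, hM0, hT.quasiMeasurePreserving.ae hM0] with x hx h0 h1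
    have := hx 1
    rw [birkhoffSum_one, Function.iterate_one, h0, h1] at this
    linarith
  exact hne.ne' (ae_iff.1 hu0)

theorem Ergodic.frequently_birkhoffSum_pos_and_nonneg [IsProbabilityMeasure μ] (hT : Ergodic T μ)
    (hum : Measurable u) (hu : Integrable u μ) (hmean : 0 ≤ ∫ x, u x ∂μ)
    (hne : 0 < μ {x | u x ≠ 0}) :
    0 < μ {x | ∃ᶠ n in atTop, 0 < birkhoffSum T u n x} ∧
      ∀ᵐ x ∂μ, ∃ᶠ n in atTop, 0 ≤ birkhoffSum T u n x := by
  have hB : MeasurableSet {x | BddAbove (range fun n => birkhoffSum T u n x)} :=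
    measurableSet_bddAbove_range (measurable_birkhoffSum hT.measurable hum)
  have hBinv : T ⁻¹' {x | BddAbove (range fun n => birkhoffSum T u n x)} =
      {x | BddAbove (range fun n => birkhoffSum T u n x)} :=
    Set.ext fun _ => bddAbove_birkhoffSum_apply_iff
  rcases hT.ae_mem_or_ae_notMem hB hBinv with hbdd | hunbdd
  · have hcocycle := hT.toMeasurePreserving.ae_birkhoffSup_eq_add hum hu hmean hbdd
    refine ⟨(hT.toMeasurePreserving.measure_birkhoffSup_pos hcocycle hne).trans_le
      (measure_mono_ae (hcocycle.mono fun x hx hpos => frequently_birkhoffSum_pos hx hpos)),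
      hT.toMeasurePreserving.ae_frequently_birkhoffSum_nonneg hum hcocycle⟩
  · have hpos : ∀ᵐ x ∂μ, ∃ᶠ n in atTop, 0 < birkhoffSum T u n x :=
      hunbdd.mono fun x hx => frequently_lt_of_not_bddAbove_range hx 0
    refine ⟨?_, hpos.mono fun x hx => hx.mono fun _ => le_of_lt⟩
    rw [measure_congr (eventuallyEq_univ.2 hpos), measure_univ]
    exact one_pos

end Recurrence

lemma shiftSeq_iterate_apply {β : Type*} (n : ℕ) (x : ℕ → β) (k : ℕ) :
    shiftSeq^[n] x k = x (k + n) := by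
  induction n generalizing x with
  | zero => rfl
  | succ n ih => rw [Function.iterate_succ_apply, ih]; rfl

/-- for a stationary ergodic real-valued process with mean zero
that is not identically zero, the random walk `W_n = ∑_{k=1}^n U_k` satisfies
`P(W_n > 0 i.o.) > 0` and `P(W_n ≥ 0 i.o.) = 1`. -/
theorem stmt19 (Psrc : Measure (ℕ → ℝ)) [IsProbabilityMeasure Psrc]
    (hErg : Ergodic shiftSeq Psrc)
    (hInt : Integrable (fun u : ℕ → ℝ => u 0) Psrc)
    (hMean : ∫ u, u 0 ∂Psrc = 0)
    (hNe : 0 < Psrc {u | u 0 ≠ 0}) :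
    0 < Psrc {u | ∃ᶠ n in atTop, 0 < ∑ k ∈ Finset.range n, u k} ∧
    Psrc {u | ∃ᶠ n in atTop, 0 ≤ ∑ k ∈ Finset.range n, u k} = 1 := by
  have hsum (n : ℕ) (u : ℕ → ℝ) :
      birkhoffSum shiftSeq (fun u : ℕ → ℝ => u 0) n u = ∑ k ∈ Finset.range n, u k :=
    Finset.sum_congr rfl fun k _ => by simp only [shiftSeq_iterate_apply, zero_add]
  obtain ⟨hpos, hnonneg⟩ :=
    hErg.frequently_birkhoffSum_pos_and_nonneg (measurable_pi_apply 0) hInt hMean.ge hNe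
  simp only [hsum] at hpos hnonneg
  exact ⟨hpos, by rw [measure_congr (eventuallyEq_univ.2 hnonneg), measure_univ]⟩

end
end
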